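/- arXiv:2302.14162 — 10 statements merged into one kernel-verified Lean document; each statement's English description precedes it below -/
import Mathlib

section
/- Let $t_0 \in \mathbb{R}$ and let $V : \mathbb{R} \to \mathbb{R}$ be differentiable with $V(t) \ge 0$ for all $t \ge t_0$. Suppose there are constants $\chi_1 > 0$, $\chi_2 > 0$, $\varrho > 1$ and $0 < \varsigma < 1$ such that $V'(t) \le -\chi_1 V(t)^{\varrho} - \chi_2 V(t)^{\varsigma}$ for all $t \ge t_0$. Then $V(t) = 0$ for every $t \ge t_0 + \frac{1}{\chi_1(\varrho-1)} + \frac{1}{\chi_2(1-\varsigma)}$. -/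
/-!
On any interval where `V > 0`, the inequality `V' ≤ -c V ^ p` says that `V ^ (1 - p) / (1 - p)`
decreases at rate at least `c`. Applied with `p = ϱ > 1`, the term `-χ₁ V ^ ϱ` brings `V` down to
at most `1` within time `1 / (χ₁ (ϱ - 1))`, whatever `V (t₀)` is; applied with `p = ς < 1`, the
term `-χ₂ V ^ ς` then drives `V` from at most `1` to `0` within time `1 / (χ₂ (1 - ς))`.
-/

open Set

section PowerDecay

variable {V : ℝ → ℝ} {a b c p : ℝ}

lemma antitoneOn_Icc_of_deriv_le_neg_rpow (hV : DifferentiableOn ℝ V (Icc a b))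
    (hnonneg : ∀ x ∈ Icc a b, 0 ≤ V x) (hc : 0 ≤ c)
    (hderiv : ∀ x ∈ Ioo a b, deriv V x ≤ -c * V x ^ p) : AntitoneOn V (Icc a b) := by
  refine antitoneOn_of_deriv_nonpos (convex_Icc a b) hV.continuousOn
    (hV.mono interior_subset) fun x hx => ?_
  rw [interior_Icc] at hx
  have hVp := mul_nonneg hc (Real.rpow_nonneg (hnonneg x (Ioo_subset_Icc_self hx)) p)
  linarith [hderiv x hx]

lemma rpow_one_sub_div_add_le_of_deriv_le_neg_rpow (hp : p ≠ 1) (hab : a ≤ b)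
    (hV : DifferentiableOn ℝ V (Icc a b)) (hpos : ∀ x ∈ Icc a b, 0 < V x)
    (hderiv : ∀ x ∈ Ioo a b, deriv V x ≤ -c * V x ^ p) :
    V b ^ (1 - p) / (1 - p) + c * (b - a) ≤ V a ^ (1 - p) / (1 - p) := by
  set W : ℝ → ℝ := fun t => V t ^ (1 - p) / (1 - p)
  have hW' : ∀ x ∈ Ioo a b, HasDerivAt W (V x ^ (-p) * deriv V x) x := by
    intro x hx
    have hVx := (hpos x (Ioo_subset_Icc_self hx)).ne'
    refine (((hV.differentiableAt (Icc_mem_nhds hx.1 hx.2)).hasDerivAt.rpow_const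
      (Or.inl hVx)).div_const (1 - p)).congr_deriv ?_
    rw [show 1 - p - 1 = -p by ring]
    field_simp [sub_ne_zero.2 hp.symm]
  have hWc : ContinuousOn W (Icc a b) :=
    (hV.continuousOn.rpow_const fun x hx => Or.inl (hpos x hx).ne').div_const _
  have hW'_le : ∀ x ∈ interior (Icc a b), deriv W x ≤ -c := by
    rw [interior_Icc]
    intro x hx
    have hVx := hpos x (Ioo_subset_Icc_self hx)
    calc deriv W x = V x ^ (-p) * deriv V x := (hW' x hx).deriv
      _ ≤ V x ^ (-p) * (-c * V x ^ p) := by gcongr; exact hderiv x hx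
      _ = -c := by
        rw [mul_left_comm, ← Real.rpow_add hVx, neg_add_cancel, Real.rpow_zero, mul_one]
  have hWdiff : DifferentiableOn ℝ W (interior (Icc a b)) := by
    rw [interior_Icc]
    exact fun x hx => (hW' x hx).differentiableAt.differentiableWithinAt
  have := (convex_Icc a b).image_sub_le_mul_sub_of_deriv_le hWc hWdiff hW'_le
    a (left_mem_Icc.2 hab) b (right_mem_Icc.2 hab) hab
  linarith

lemma le_one_of_deriv_le_neg_rpow_of_one_lt (hp : 1 < p) (hc : 0 < c)
    (hab : a + 1 / (c * (p - 1)) ≤ b) (hV : DifferentiableOn ℝ V (Icc a b))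
    (hnonneg : ∀ x ∈ Icc a b, 0 ≤ V x) (hderiv : ∀ x ∈ Ioo a b, deriv V x ≤ -c * V x ^ p) :
    V b ≤ 1 := by
  by_contra! hVb
  have hcp : 0 < c * (p - 1) := mul_pos hc (sub_pos.2 hp)
  have hab' : a ≤ b := le_of_add_le_of_nonneg_left hab (by positivity)
  have hanti := antitoneOn_Icc_of_deriv_le_neg_rpow hV hnonneg hc.le hderiv
  have hpos : ∀ x ∈ Icc a b, 0 < V x := fun x hx =>
    one_pos.trans (hVb.trans_le (hanti hx (right_mem_Icc.2 hab') hx.2))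
  have key := rpow_one_sub_div_add_le_of_deriv_le_neg_rpow hp.ne' hab' hV hpos hderiv
  have hVb' : V b ^ (1 - p) < 1 := Real.rpow_lt_one_of_one_lt_of_neg hVb (by linarith)
  have hVa' : 0 < V a ^ (1 - p) := Real.rpow_pos_of_pos (hpos a (left_mem_Icc.2 hab')) _
  have htime : 1 ≤ c * (p - 1) * (b - a) := by
    rw [← div_le_iff₀' hcp]; linarith
  have hq : 1 - p < 0 := by linarith
  rw [le_div_iff_of_neg hq, add_mul, div_mul_cancel₀ _ hq.ne] at key
  linarith

lemma eq_zero_of_deriv_le_neg_rpow_of_lt_one (hp : p < 1) (hc : 0 < c)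
    (hab : a + 1 / (c * (1 - p)) ≤ b) (hV : DifferentiableOn ℝ V (Icc a b))
    (hnonneg : ∀ x ∈ Icc a b, 0 ≤ V x) (hVa : V a ≤ 1)
    (hderiv : ∀ x ∈ Ioo a b, deriv V x ≤ -c * V x ^ p) :
    V b = 0 := by
  have hcp : 0 < c * (1 - p) := mul_pos hc (sub_pos.2 hp)
  have hab' : a ≤ b := le_of_add_le_of_nonneg_left hab (by positivity)
  by_contra hne
  have hVb : 0 < V b := (hnonneg b (right_mem_Icc.2 hab')).lt_of_ne' hne
  have hanti := antitoneOn_Icc_of_deriv_le_neg_rpow hV hnonneg hc.le hderiv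
  have hpos : ∀ x ∈ Icc a b, 0 < V x := fun x hx =>
    hVb.trans_le (hanti hx (right_mem_Icc.2 hab') hx.2)
  have key := rpow_one_sub_div_add_le_of_deriv_le_neg_rpow hp.ne hab' hV hpos hderiv
  have hVb' : 0 < V b ^ (1 - p) := Real.rpow_pos_of_pos hVb _
  have hVa' : V a ^ (1 - p) ≤ 1 :=
    Real.rpow_le_one (hnonneg a (left_mem_Icc.2 hab')) hVa (by linarith)
  have htime : 1 ≤ c * (1 - p) * (b - a) := by
    rw [← div_le_iff₀' hcp]; linarith
  have hq : 0 < 1 - p := by linarith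
  rw [div_add' _ _ _ hq.ne', div_le_div_iff_of_pos_right hq] at key
  linarith

end PowerDecay

theorem fixed_time_stability_general
    (t0 : ℝ) (V : ℝ → ℝ) (hV : Differentiable ℝ V)
    (hVnonneg : ∀ t, t0 ≤ t → 0 ≤ V t)
    (χ1 χ2 ϱ ς : ℝ)
    (hχ1 : 0 < χ1) (hχ2 : 0 < χ2) (hϱ : 1 < ϱ) (hς1 : ς < 1)
    (hineq : ∀ t, t0 ≤ t → deriv V t ≤ -χ1 * (V t) ^ ϱ - χ2 * (V t) ^ ς) :
    ∀ t, t0 + 1 / (χ1 * (ϱ - 1)) + 1 / (χ2 * (1 - ς)) ≤ t → V t = 0 := by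
  intro t ht
  have hdecay₁ : ∀ x, t0 ≤ x → deriv V x ≤ -χ1 * V x ^ ϱ := fun x hx => by
    linarith [hineq x hx, mul_nonneg hχ2.le (Real.rpow_nonneg (hVnonneg x hx) ς)]
  have hdecay₂ : ∀ x, t0 ≤ x → deriv V x ≤ -χ2 * V x ^ ς := fun x hx => by
    linarith [hineq x hx, mul_nonneg hχ1.le (Real.rpow_nonneg (hVnonneg x hx) ϱ)]
  set t1 := t0 + 1 / (χ1 * (ϱ - 1))
  have ht01 : t0 ≤ t1 :=
    le_add_of_nonneg_right (one_div_pos.2 (mul_pos hχ1 (sub_pos.2 hϱ))).le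
  have hVt1 : V t1 ≤ 1 :=
    le_one_of_deriv_le_neg_rpow_of_one_lt hϱ hχ1 le_rfl hV.differentiableOn
      (fun x hx => hVnonneg x hx.1) fun x hx => hdecay₁ x hx.1.le
  exact eq_zero_of_deriv_le_neg_rpow_of_lt_one hς1 hχ2 ht hV.differentiableOn
    (fun x hx => hVnonneg x (ht01.trans hx.1)) hVt1 fun x hx => hdecay₂ x (ht01.trans hx.1.le)

/-- Fixed-time stability (Lemma 1): a nonnegative differentiable scalar Lyapunov
function satisfying the two-term power differential inequality vanishes after a
settling time independent of its initial value. Powers are real powers (`rpow`). -/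
theorem fixed_time_stability
    (t0 : ℝ) (V : ℝ → ℝ) (hV : Differentiable ℝ V)
    (hVnonneg : ∀ t, t0 ≤ t → 0 ≤ V t)
    (χ1 χ2 ϱ ς : ℝ)
    (hχ1 : 0 < χ1) (hχ2 : 0 < χ2) (hϱ : 1 < ϱ) (hς0 : 0 < ς) (hς1 : ς < 1)
    (hineq : ∀ t, t0 ≤ t → deriv V t ≤ -χ1 * (V t) ^ ϱ - χ2 * (V t) ^ ς) :
    ∀ t, t0 + 1 / (χ1 * (ϱ - 1)) + 1 / (χ2 * (1 - ς)) ≤ t → V t = 0 :=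
  fixed_time_stability_general t0 V hV hVnonneg χ1 χ2 ϱ ς hχ1 hχ2 hϱ hς1 hineq
end

section
/- Let $t_0 \in \mathbb{R}$ and let $V : \mathbb{R} \to \mathbb{R}$ be differentiable with $V(t) \ge 0$ for all $t \ge t_0$ and $V(t_0) \le 1$. Suppose there are constants $\chi_2 > 0$ and $0 < \varsigma < 1$ such that $V'(t) \le -\chi_2 V(t)^{\varsigma}$ for all $t \ge t_0$. Then $V(t) = 0$ for every $t \ge t_0 + \frac{1}{\chi_2(1-\varsigma)}$. -/
/-!
While `V > 0`, the decay inequality gives `(V ^ (1 - ς))' = (1 - ς) V ^ (-ς) V' ≤ -χ (1 - ς)`,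
so `V ^ (1 - ς)` decreases at least linearly and cannot stay positive beyond time
`V t₀ ^ (1 - ς) / (χ (1 - ς))` after `t₀`; since `V` is nonincreasing and nonnegative, it stays
at zero from then on. A start in the unit sublevel set bounds that time by `1 / (χ (1 - ς))`.
-/

open Set

section DecayInequality

variable {V : ℝ → ℝ} {χ ς : ℝ}

theorem antitoneOn_Ici_of_deriv_le_neg_mul_rpow {t₀ : ℝ} (hV : Differentiable ℝ V)
    (hVnonneg : ∀ t, t₀ ≤ t → 0 ≤ V t) (hχ : 0 ≤ χ)
    (hineq : ∀ t, t₀ ≤ t → deriv V t ≤ -χ * V t ^ ς) :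
    AntitoneOn V (Ici t₀) := by
  refine antitoneOn_of_deriv_nonpos (convex_Ici t₀) hV.continuous.continuousOn
    hV.differentiableOn fun t ht => ?_
  rw [interior_Ici] at ht
  have hpow : 0 ≤ χ * V t ^ ς := mul_nonneg hχ (Real.rpow_nonneg (hVnonneg t ht.le) ς)
  linarith [hineq t ht.le]

theorem deriv_rpow_one_sub_le_of_deriv_le_neg_mul_rpow {t : ℝ} (hV : Differentiable ℝ V)
    (hVt : 0 < V t) (hς : ς < 1) (hineq : deriv V t ≤ -χ * V t ^ ς) :
    deriv (fun s => V s ^ (1 - ς)) t ≤ -(χ * (1 - ς)) := by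
  have hderiv : deriv (fun s => V s ^ (1 - ς)) t = deriv V t * (1 - ς) * V t ^ (-ς) := by
    rw [((hV t).hasDerivAt.rpow_const (Or.inl hVt.ne')).deriv, sub_sub_cancel_left]
  have hcancel : V t ^ ς * V t ^ (-ς) = 1 := by
    rw [← Real.rpow_add hVt, add_neg_cancel, Real.rpow_zero]
  calc deriv (fun s => V s ^ (1 - ς)) t
      = deriv V t * ((1 - ς) * V t ^ (-ς)) := by rw [hderiv, mul_assoc]
    _ ≤ -χ * V t ^ ς * ((1 - ς) * V t ^ (-ς)) :=
        mul_le_mul_of_nonneg_right hineq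
          (mul_nonneg (by linarith) (Real.rpow_pos_of_pos hVt _).le)
    _ = -(χ * (1 - ς)) * (V t ^ ς * V t ^ (-ς)) := by ring
    _ = -(χ * (1 - ς)) := by rw [hcancel, mul_one]

theorem rpow_one_sub_add_mul_le_of_deriv_le_neg_mul_rpow {a b : ℝ} (hab : a ≤ b)
    (hV : Differentiable ℝ V) (hVpos : ∀ t ∈ Icc a b, 0 < V t) (hς : ς < 1)
    (hineq : ∀ t ∈ Icc a b, deriv V t ≤ -χ * V t ^ ς) :
    V b ^ (1 - ς) + χ * (1 - ς) * (b - a) ≤ V a ^ (1 - ς) := by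
  have hdiff : ∀ t ∈ Icc a b, DifferentiableAt ℝ (fun s => V s ^ (1 - ς)) t :=
    fun t ht => (hV t).rpow_const (Or.inl (hVpos t ht).ne')
  have hmvt := (convex_Icc a b).image_sub_le_mul_sub_of_deriv_le
    (fun t ht => (hdiff t ht).continuousAt.continuousWithinAt)
    (fun t ht => (hdiff t (interior_subset ht)).differentiableWithinAt)
    (fun t ht => deriv_rpow_one_sub_le_of_deriv_le_neg_mul_rpow hV
      (hVpos t (interior_subset ht)) hς (hineq t (interior_subset ht)))
    a (left_mem_Icc.2 hab) b (right_mem_Icc.2 hab) hab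
  linarith

theorem eq_zero_of_deriv_le_neg_mul_rpow {t₀ : ℝ} (hV : Differentiable ℝ V)
    (hVnonneg : ∀ t, t₀ ≤ t → 0 ≤ V t) (hχ : 0 < χ) (hς : ς < 1)
    (hineq : ∀ t, t₀ ≤ t → deriv V t ≤ -χ * V t ^ ς) :
    ∀ t, t₀ + V t₀ ^ (1 - ς) / (χ * (1 - ς)) ≤ t → V t = 0 := by
  set T := t₀ + V t₀ ^ (1 - ς) / (χ * (1 - ς))
  have hrate : 0 < χ * (1 - ς) := mul_pos hχ (by linarith)
  have ht₀T : t₀ ≤ T :=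
    le_add_of_nonneg_right (div_nonneg (Real.rpow_nonneg (hVnonneg t₀ le_rfl) _) hrate.le)
  have hanti := antitoneOn_Ici_of_deriv_le_neg_mul_rpow hV hVnonneg hχ.le hineq
  have hVT : V T = 0 := by
    by_contra hne
    have hVTpos : 0 < V T := (hVnonneg T ht₀T).lt_of_ne' hne
    have hVpos : ∀ t ∈ Icc t₀ T, 0 < V t := fun t ht =>
      hVTpos.trans_le (hanti ht.1 ht₀T ht.2)
    have hdecay := rpow_one_sub_add_mul_le_of_deriv_le_neg_mul_rpow ht₀T hV hVpos hς
      fun t ht => hineq t ht.1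
    have hspan : χ * (1 - ς) * (T - t₀) = V t₀ ^ (1 - ς) := by
      rw [add_sub_cancel_left, mul_div_cancel₀ _ hrate.ne']
    linarith [Real.rpow_pos_of_pos hVTpos (1 - ς)]
  intro t hTt
  have ht₀t : t₀ ≤ t := ht₀T.trans hTt
  exact le_antisymm (hVT ▸ hanti ht₀T ht₀t hTt) (hVnonneg t ht₀t)

end DecayInequality

theorem fixed_time_phase_two_general
    (t0 : ℝ) (V : ℝ → ℝ) (hV : Differentiable ℝ V)
    (hVnonneg : ∀ t, t0 ≤ t → 0 ≤ V t) (hV0 : V t0 ≤ 1)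
    (χ2 ς : ℝ) (hχ2 : 0 < χ2) (hς1 : ς < 1)
    (hineq : ∀ t, t0 ≤ t → deriv V t ≤ -χ2 * (V t) ^ ς) :
    ∀ t, t0 + 1 / (χ2 * (1 - ς)) ≤ t → V t = 0 := by
  intro t ht
  have hstart : V t0 ^ (1 - ς) ≤ 1 := Real.rpow_le_one (hVnonneg t0 le_rfl) hV0 (by linarith)
  refine eq_zero_of_deriv_le_neg_mul_rpow hV hVnonneg hχ2 hς1 hineq t (le_trans ?_ ht)
  gcongr

/-- Second phase of the fixed-time stability criterion: under the sublinear power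
decay inequality, a Lyapunov function starting in the unit sublevel set reaches zero
in finite time bounded by `1 / (χ2 * (1 - ς))`. Powers are real powers (`rpow`). -/
theorem fixed_time_phase_two
    (t0 : ℝ) (V : ℝ → ℝ) (hV : Differentiable ℝ V)
    (hVnonneg : ∀ t, t0 ≤ t → 0 ≤ V t) (hV0 : V t0 ≤ 1)
    (χ2 ς : ℝ) (hχ2 : 0 < χ2) (hς0 : 0 < ς) (hς1 : ς < 1)
    (hineq : ∀ t, t0 ≤ t → deriv V t ≤ -χ2 * (V t) ^ ς) :
    ∀ t, t0 + 1 / (χ2 * (1 - ς)) ≤ t → V t = 0 :=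
  fixed_time_phase_two_general t0 V hV hVnonneg hV0 χ2 ς hχ2 hς1 hineq
end

section
/- Let $t_0 \in \mathbb{R}$ and let $V : \mathbb{R} \to \mathbb{R}$ be differentiable with $V(t) \ge 0$ for all $t \ge t_0$. Suppose there are constants $\chi_1 > 0$, $\chi_2 > 0$, $p > 1$, $0 < q < 1$ and $0 < \varphi < \infty$ such that $V'(t) \le -\chi_1 V(t)^{p} - \chi_2 V(t)^{q} + \varphi$ for all $t \ge t_0$. Then for every $\kappa$ with $0 < \kappa < 1$ and every $t \ge t_0 + \frac{1}{\chi_1 \kappa (p-1)} + \frac{1}{\chi_2 \kappa (1-q)}$ one has $V(t) \le \min\left\{ \left(\frac{\varphi}{(1-\kappa)\chi_1}\right)^{1/p},\ \left(\frac{\varphi}{(1-\kappa)\chi_2}\right)^{1/q} \right\}$. -/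
/-!
Above the level `B = min ((φ / ((1 - κ) χ₁)) ^ (1 / p), (φ / ((1 - κ) χ₂)) ^ (1 / q))` the
perturbation `φ` is absorbed by a `1 - κ` share of one of the decay terms, so there
`V' ≤ -κ χ₁ V ^ p - κ χ₂ V ^ q`. While this holds, `V ^ (1 - r) / (1 - r) + κ χ t` is
nonincreasing for `(r, χ) = (p, χ₁)` and `(q, χ₂)`: the first forces `V ≤ 1` after time
`1 / (κ χ₁ (p - 1))` whatever the initial value, and from `V ≤ 1` the second would drive `V` to
`0` within a further `1 / (κ χ₂ (1 - q))`. So `V` reaches `B` within the settling time, and it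
never crosses `B` upwards afterwards because `V' < 0` on that level.
-/

open Set

theorem antitoneOn_rpow_one_sub_div_add_mul {f : ℝ → ℝ} {a b c r : ℝ} (hr : r ≠ 1)
    (hf : ∀ x ∈ Icc a b, DifferentiableAt ℝ f x) (hpos : ∀ x ∈ Icc a b, 0 < f x)
    (hderiv : ∀ x ∈ Ioo a b, deriv f x ≤ -c * f x ^ r) :
    AntitoneOn (fun x => f x ^ (1 - r) / (1 - r) + c * x) (Icc a b) := by
  have hr' : 1 - r ≠ 0 := sub_ne_zero.mpr hr.symm
  have hasDeriv : ∀ x ∈ Icc a b, HasDerivAt (fun x => f x ^ (1 - r) / (1 - r) + c * x)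
      (deriv f x * f x ^ (-r) + c) x := by
    intro x hx
    have h := (((hf x hx).hasDerivAt.rpow_const (p := 1 - r) (.inl (hpos x hx).ne')).div_const
      (1 - r)).add ((hasDerivAt_id x).const_mul c)
    refine h.congr_deriv ?_
    rw [sub_sub_cancel_left]
    field_simp
  refine antitoneOn_of_deriv_nonpos (convex_Icc a b)
    (fun x hx => (hasDeriv x hx).continuousAt.continuousWithinAt)
    (fun x hx => (hasDeriv x (interior_subset hx)).differentiableAt.differentiableWithinAt)
    fun x hx => ?_
  rw [interior_Icc] at hx
  have hfx := hpos x (Ioo_subset_Icc_self hx)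
  rw [(hasDeriv x (Ioo_subset_Icc_self hx)).deriv, Real.rpow_neg hfx.le, ← div_eq_mul_inv,
    div_add' _ _ _ (Real.rpow_pos_of_pos hfx r).ne']
  exact div_nonpos_of_nonpos_of_nonneg (by linarith [hderiv x hx]) (Real.rpow_nonneg hfx.le r)

theorem mul_mul_sub_lt_rpow_one_sub_of_one_lt {f : ℝ → ℝ} {a b c r : ℝ} (hr : 1 < r) (hab : a ≤ b)
    (hf : ∀ x ∈ Icc a b, DifferentiableAt ℝ f x) (hpos : ∀ x ∈ Icc a b, 0 < f x)
    (hderiv : ∀ x ∈ Ioo a b, deriv f x ≤ -c * f x ^ r) :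
    (r - 1) * c * (b - a) < f b ^ (1 - r) := by
  have h := antitoneOn_rpow_one_sub_div_add_mul hr.ne' hf hpos hderiv
    (left_mem_Icc.mpr hab) (right_mem_Icc.mpr hab) hab
  have hfa := Real.rpow_pos_of_pos (hpos a (left_mem_Icc.mpr hab)) (1 - r)
  dsimp only at h
  rw [div_add' _ _ _ (sub_ne_zero.mpr hr.ne), div_add' _ _ _ (sub_ne_zero.mpr hr.ne),
    div_le_div_right_of_neg (by linarith)] at h
  nlinarith

theorem mul_mul_sub_lt_rpow_one_sub_of_lt_one {f : ℝ → ℝ} {a b c r : ℝ} (hr : r < 1) (hab : a ≤ b)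
    (hf : ∀ x ∈ Icc a b, DifferentiableAt ℝ f x) (hpos : ∀ x ∈ Icc a b, 0 < f x)
    (hderiv : ∀ x ∈ Ioo a b, deriv f x ≤ -c * f x ^ r) :
    (1 - r) * c * (b - a) < f a ^ (1 - r) := by
  have h := antitoneOn_rpow_one_sub_div_add_mul hr.ne hf hpos hderiv
    (left_mem_Icc.mpr hab) (right_mem_Icc.mpr hab) hab
  have hfb := Real.rpow_pos_of_pos (hpos b (right_mem_Icc.mpr hab)) (1 - r)
  dsimp only at h
  rw [div_add' _ _ _ (sub_ne_zero.mpr hr.ne'), div_add' _ _ _ (sub_ne_zero.mpr hr.ne'),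
    div_le_div_iff_of_pos_right (by linarith)] at h
  nlinarith

theorem image_le_of_deriv_neg_of_eq {f : ℝ → ℝ} {a b B : ℝ}
    (hf : ∀ x ∈ Icc a b, DifferentiableAt ℝ f x) (ha : f a ≤ B)
    (hB : ∀ x ∈ Ico a b, f x = B → deriv f x < 0) : ∀ x ∈ Icc a b, f x ≤ B :=
  fun _ hx => image_le_of_deriv_right_lt_deriv_boundary (B := fun _ => B)
    (fun x hx => (hf x hx).continuousAt.continuousWithinAt)
    (fun x hx => (hf x (Ico_subset_Icc_self hx)).hasDerivAt.hasDerivWithinAt) ha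
    (fun x => hasDerivAt_const x B) hB hx

section FixedTime

variable {V : ℝ → ℝ} {t₀ c₁ c₂ p q B : ℝ}

theorem exists_le_of_deriv_le_neg_rpow_sub_rpow (hc₁ : 0 < c₁) (hc₂ : 0 < c₂) (hp : 1 < p)
    (hq : q < 1) (hB : 0 ≤ B)
    (hV : ∀ t ∈ Icc t₀ (t₀ + 1 / (c₁ * (p - 1)) + 1 / (c₂ * (1 - q))), DifferentiableAt ℝ V t)
    (hdecay : ∀ t ∈ Icc t₀ (t₀ + 1 / (c₁ * (p - 1)) + 1 / (c₂ * (1 - q))), B ≤ V t →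
      deriv V t ≤ -c₁ * V t ^ p - c₂ * V t ^ q) :
    ∃ s ∈ Icc t₀ (t₀ + 1 / (c₁ * (p - 1)) + 1 / (c₂ * (1 - q))), V s ≤ B := by
  set t₁ := t₀ + 1 / (c₁ * (p - 1))
  set T := t₁ + 1 / (c₂ * (1 - q))
  by_contra! hlarge
  have hk₁ : 0 < c₁ * (p - 1) := mul_pos hc₁ (sub_pos.mpr hp)
  have hk₂ : 0 < c₂ * (1 - q) := mul_pos hc₂ (sub_pos.mpr hq)
  have hT₁ : 0 < 1 / (c₁ * (p - 1)) := one_div_pos.mpr hk₁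
  have hT₂ : 0 < 1 / (c₂ * (1 - q)) := one_div_pos.mpr hk₂
  have h₀₁ : Icc t₀ t₁ ⊆ Icc t₀ T := Icc_subset_Icc_right (by linarith)
  have h₁₂ : Icc t₁ T ⊆ Icc t₀ T := Icc_subset_Icc_left (by linarith)
  have hpos : ∀ t ∈ Icc t₀ T, 0 < V t := fun t ht => hB.trans_lt (hlarge t ht)
  have hdecay_p : ∀ t ∈ Icc t₀ T, deriv V t ≤ -c₁ * V t ^ p := fun t ht => by
    nlinarith [hdecay t ht (hlarge t ht).le, Real.rpow_pos_of_pos (hpos t ht) q]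
  have hdecay_q : ∀ t ∈ Icc t₀ T, deriv V t ≤ -c₂ * V t ^ q := fun t ht => by
    nlinarith [hdecay t ht (hlarge t ht).le, Real.rpow_pos_of_pos (hpos t ht) p]
  have hbelow : 1 < V t₁ ^ (1 - p) := by
    have := mul_mul_sub_lt_rpow_one_sub_of_one_lt hp (by linarith) (fun t ht => hV t (h₀₁ ht))
      (fun t ht => hpos t (h₀₁ ht)) (fun t ht => hdecay_p t (h₀₁ (Ioo_subset_Icc_self ht)))
    rwa [add_sub_cancel_left, mul_comm (p - 1), mul_one_div_cancel hk₁.ne'] at this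
  have habove : 1 < V t₁ ^ (1 - q) := by
    have := mul_mul_sub_lt_rpow_one_sub_of_lt_one hq (by linarith) (fun t ht => hV t (h₁₂ ht))
      (fun t ht => hpos t (h₁₂ ht)) (fun t ht => hdecay_q t (h₁₂ (Ioo_subset_Icc_self ht)))
    rwa [add_sub_cancel_left, mul_comm (1 - q), mul_one_div_cancel hk₂.ne'] at this
  have hle : V t₁ ≤ 1 := by
    by_contra! h
    exact hbelow.not_ge (Real.rpow_le_one_of_one_le_of_nonpos h.le (by linarith))
  have ht₁ : t₁ ∈ Icc t₀ T := h₀₁ (right_mem_Icc.mpr (by linarith))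
  exact habove.not_ge (Real.rpow_le_one (hpos t₁ ht₁).le hle (by linarith))

theorem le_of_deriv_le_neg_rpow_sub_rpow (hc₁ : 0 < c₁) (hc₂ : 0 < c₂) (hp : 1 < p)
    (hq : q < 1) (hB : 0 < B) (hV : ∀ t ∈ Ici t₀, DifferentiableAt ℝ V t)
    (hdecay : ∀ t ∈ Ici t₀, B ≤ V t → deriv V t ≤ -c₁ * V t ^ p - c₂ * V t ^ q) :
    ∀ t, t₀ + 1 / (c₁ * (p - 1)) + 1 / (c₂ * (1 - q)) ≤ t → V t ≤ B := by
  intro t ht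
  obtain ⟨s, hs, hVs⟩ := exists_le_of_deriv_le_neg_rpow_sub_rpow hc₁ hc₂ hp hq hB.le
    (fun t ht => hV t ht.1) (fun t ht => hdecay t ht.1)
  refine image_le_of_deriv_neg_of_eq (fun x hx => hV x (hs.1.trans hx.1)) hVs
    (fun x hx hVx => ?_) t ⟨hs.2.trans ht, le_rfl⟩
  have := hdecay x (hs.1.trans hx.1) hVx.ge
  rw [hVx] at this
  nlinarith [Real.rpow_pos_of_pos hB p, Real.rpow_pos_of_pos hB q]

end FixedTime

theorem le_mul_rpow_of_div_rpow_one_div_le {φ c r x : ℝ} (hφ : 0 ≤ φ) (hc : 0 < c) (hr : 0 < r)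
    (h : (φ / c) ^ (1 / r) ≤ x) : φ ≤ c * x ^ r := by
  have hx : 0 ≤ x := (Real.rpow_nonneg (div_nonneg hφ hc.le) _).trans h
  rwa [one_div, Real.rpow_inv_le_iff_of_pos (div_nonneg hφ hc.le) hx hr, div_le_iff₀' hc] at h

theorem practical_fixed_time_stability_general
    (t0 : ℝ) (V : ℝ → ℝ) (hV : Differentiable ℝ V)
    (χ1 χ2 p q φ : ℝ)
    (hχ1 : 0 < χ1) (hχ2 : 0 < χ2) (hp : 1 < p) (hq0 : 0 < q) (hq1 : q < 1)
    (hφ : 0 < φ)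
    (hineq : ∀ t, t0 ≤ t → deriv V t ≤ -χ1 * (V t) ^ p - χ2 * (V t) ^ q + φ) :
    ∀ κ : ℝ, 0 < κ → κ < 1 →
      ∀ t, t0 + 1 / (χ1 * κ * (p - 1)) + 1 / (χ2 * κ * (1 - q)) ≤ t →
        V t ≤ min ((φ / ((1 - κ) * χ1)) ^ (1 / p)) ((φ / ((1 - κ) * χ2)) ^ (1 / q)) := by
  intro κ hκ0 hκ1
  have hκ : 0 < 1 - κ := sub_pos.mpr hκ1
  refine le_of_deriv_le_neg_rpow_sub_rpow (mul_pos hχ1 hκ0) (mul_pos hχ2 hκ0) hp hq1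
    (lt_min (by positivity) (by positivity)) (fun t _ => hV t) fun t ht hBt => ?_
  have hVt : 0 ≤ V t := (le_min (by positivity) (by positivity)).trans hBt
  have hp_term : 0 ≤ (1 - κ) * χ1 * V t ^ p := by positivity
  have hq_term : 0 ≤ (1 - κ) * χ2 * V t ^ q := by positivity
  have hφle : φ ≤ (1 - κ) * χ1 * V t ^ p + (1 - κ) * χ2 * V t ^ q := by
    rcases min_le_iff.mp hBt with h | h
    · linarith [le_mul_rpow_of_div_rpow_one_div_le hφ.le (mul_pos hκ hχ1) (by linarith) h]
    · linarith [le_mul_rpow_of_div_rpow_one_div_le hφ.le (mul_pos hκ hχ2) hq0 h]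
  linarith [hineq t ht]

/-- Practical fixed-time stability (Lemma 2): a nonnegative differentiable Lyapunov
function satisfying the perturbed two-term power differential inequality enters a
residual set, determined by `φ, κ, χ1, χ2, p, q`, after a settling time independent
of its initial value. Powers are real powers (`rpow`). -/
theorem practical_fixed_time_stability
    (t0 : ℝ) (V : ℝ → ℝ) (hV : Differentiable ℝ V)
    (hVnonneg : ∀ t, t0 ≤ t → 0 ≤ V t)
    (χ1 χ2 p q φ : ℝ)
    (hχ1 : 0 < χ1) (hχ2 : 0 < χ2) (hp : 1 < p) (hq0 : 0 < q) (hq1 : q < 1)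
    (hφ : 0 < φ)
    (hineq : ∀ t, t0 ≤ t → deriv V t ≤ -χ1 * (V t) ^ p - χ2 * (V t) ^ q + φ) :
    ∀ κ : ℝ, 0 < κ → κ < 1 →
      ∀ t, t0 + 1 / (χ1 * κ * (p - 1)) + 1 / (χ2 * κ * (1 - q)) ≤ t →
        V t ≤ min ((φ / ((1 - κ) * χ1)) ^ (1 / p)) ((φ / ((1 - κ) * χ2)) ^ (1 / q)) :=
  practical_fixed_time_stability_general t0 V hV χ1 χ2 p q φ hχ1 hχ2 hp hq0 hq1 hφ hineq
end

section
/- Let $t_0 \in \mathbb{R}$ and let $V : \mathbb{R} \to \mathbb{R}$ be differentiable with $V(t) \ge 0$ for all $t \ge t_0$. Suppose there are constants $\zeta_1 > 0$, $\zeta_2 > 0$, $0 < \gamma < 1$ and $\iota > 1$ such that $V'(t) \le -2^{\frac{\gamma+1}{2}} \zeta_1 V(t)^{\frac{\gamma+1}{2}} - 2^{\frac{\iota+1}{2}} \zeta_2 V(t)^{\frac{\iota+1}{2}}$ for all $t \ge t_0$. Then $V(t) = 0$ for every $t \ge t_0 + \frac{2}{\zeta_1 2^{\frac{\gamma+1}{2}}(1-\gamma)}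 + \frac{2}{\zeta_2 2^{\frac{\iota+1}{2}}(\iota-1)}$. -/
/-!
Writing `W = V ^ (1 - q)`, the comparison inequality `V' ≤ -c V ^ q` becomes linear:
`W' ≤ -c (1 - q)` when `q < 1` and `W' ≥ c (q - 1)` when `q > 1`. Since `W > 0` while `V > 0`,
the superlinear term alone brings `V` down to `1` within time `1 / (c₂ (β - 1))`, whatever `V t₀`
is, and from there the sublinear term alone drives `V` to `0` within time `1 / (c₁ (1 - α))`.
As `V' ≤ 0`, `V` stays at `0` afterwards.
-/

open Set

theorem mul_rpow_neg_le_of_le_neg_mul_rpow {x y c q : ℝ} (hx : 0 < x) (h : y ≤ -c * x ^ q) :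
    y * x ^ (-q) ≤ -c := by
  have hxq : x ^ q * x ^ (-q) = 1 := by
    rw [Real.rpow_neg hx.le, mul_inv_cancel₀ (Real.rpow_pos_of_pos hx q).ne']
  calc y * x ^ (-q) ≤ -c * x ^ q * x ^ (-q) :=
        mul_le_mul_of_nonneg_right h (Real.rpow_pos_of_pos hx _).le
    _ = -c := by rw [mul_assoc, hxq, mul_one]

section RpowComparison

variable {V : ℝ → ℝ} {a b c q : ℝ}

theorem hasDerivAt_rpow_one_sub {s : ℝ} (hV : DifferentiableAt ℝ V s) (hpos : 0 < V s) :
    HasDerivAt (fun t => V t ^ (1 - q)) ((1 - q) * (deriv V s * V s ^ (-q))) s := by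
  convert hV.hasDerivAt.rpow_const (p := 1 - q) (Or.inl hpos.ne') using 1
  rw [show 1 - q - 1 = -q by ring]
  ring

theorem continuousOn_rpow_one_sub (hV : Differentiable ℝ V) (hpos : ∀ s ∈ Icc a b, 0 < V s) :
    ContinuousOn (fun t => V t ^ (1 - q)) (Icc a b) :=
  hV.continuous.continuousOn.rpow_const fun s hs => Or.inl (hpos s hs).ne'

theorem rpow_one_sub_sub_le_of_deriv_le_neg_mul_rpow (hq : q < 1) (hV : Differentiable ℝ V)
    (hab : a ≤ b) (hpos : ∀ s ∈ Icc a b, 0 < V s)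
    (hder : ∀ s ∈ Icc a b, deriv V s ≤ -c * V s ^ q) :
    V b ^ (1 - q) - V a ^ (1 - q) ≤ -(c * (1 - q)) * (b - a) := by
  have hW : ∀ s ∈ interior (Icc a b),
      HasDerivAt (fun t => V t ^ (1 - q)) ((1 - q) * (deriv V s * V s ^ (-q))) s := by
    intro s hs
    exact hasDerivAt_rpow_one_sub (hV s) (hpos s (interior_subset hs))
  refine (convex_Icc a b).image_sub_le_mul_sub_of_deriv_le (continuousOn_rpow_one_sub hV hpos)
    (fun s hs => (hW s hs).differentiableAt.differentiableWithinAt) (fun s hs => ?_)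
    a (left_mem_Icc.2 hab) b (right_mem_Icc.2 hab) hab
  have hs' := interior_subset hs
  rw [(hW s hs).deriv]
  nlinarith [mul_rpow_neg_le_of_le_neg_mul_rpow (hpos s hs') (hder s hs')]

theorem mul_sub_le_rpow_one_sub_sub_of_deriv_le_neg_mul_rpow (hq : 1 < q)
    (hV : Differentiable ℝ V) (hab : a ≤ b) (hpos : ∀ s ∈ Icc a b, 0 < V s)
    (hder : ∀ s ∈ Icc a b, deriv V s ≤ -c * V s ^ q) :
    c * (q - 1) * (b - a) ≤ V b ^ (1 - q) - V a ^ (1 - q) := by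
  have hW : ∀ s ∈ interior (Icc a b),
      HasDerivAt (fun t => V t ^ (1 - q)) ((1 - q) * (deriv V s * V s ^ (-q))) s := by
    intro s hs
    exact hasDerivAt_rpow_one_sub (hV s) (hpos s (interior_subset hs))
  refine (convex_Icc a b).mul_sub_le_image_sub_of_le_deriv (continuousOn_rpow_one_sub hV hpos)
    (fun s hs => (hW s hs).differentiableAt.differentiableWithinAt) (fun s hs => ?_)
    a (left_mem_Icc.2 hab) b (right_mem_Icc.2 hab) hab
  have hs' := interior_subset hs
  rw [(hW s hs).deriv]
  nlinarith [mul_rpow_neg_le_of_le_neg_mul_rpow (hpos s hs') (hder s hs')]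

end RpowComparison

section FixedTime

variable {V : ℝ → ℝ} {a c q : ℝ}

theorem exists_le_one_of_deriv_le_neg_mul_rpow (hq : 1 < q) (hc : 0 < c)
    (hV : Differentiable ℝ V) (hder : ∀ s ∈ Ici a, deriv V s ≤ -c * V s ^ q) :
    ∃ s ∈ Icc a (a + (c * (q - 1))⁻¹), V s ≤ 1 := by
  by_contra! hgt
  have hT : 0 < c * (q - 1) := mul_pos hc (by linarith)
  have hab : a ≤ a + (c * (q - 1))⁻¹ := le_add_of_nonneg_right (inv_pos.2 hT).le
  have hcmp := mul_sub_le_rpow_one_sub_sub_of_deriv_le_neg_mul_rpow hq hV hab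
    (fun s hs => one_pos.trans (hgt s hs)) (fun s hs => hder s hs.1)
  have hb : V (a + (c * (q - 1))⁻¹) ^ (1 - q) < 1 :=
    Real.rpow_lt_one_of_one_lt_of_neg (hgt _ (right_mem_Icc.2 hab)) (by linarith)
  have ha : 0 < V a ^ (1 - q) :=
    Real.rpow_pos_of_pos (one_pos.trans (hgt a (left_mem_Icc.2 hab))) _
  rw [add_sub_cancel_left, mul_inv_cancel₀ hT.ne'] at hcmp
  linarith

theorem exists_eq_zero_of_deriv_le_neg_mul_rpow (hq : q < 1) (hc : 0 < c)
    (hV : Differentiable ℝ V) (hnonneg : ∀ s ∈ Ici a, 0 ≤ V s)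
    (hder : ∀ s ∈ Ici a, deriv V s ≤ -c * V s ^ q) :
    ∃ s ∈ Icc a (a + V a ^ (1 - q) / (c * (1 - q))), V s = 0 := by
  by_contra! hne
  have hT : 0 < c * (1 - q) := mul_pos hc (by linarith)
  have hab : a ≤ a + V a ^ (1 - q) / (c * (1 - q)) :=
    le_add_of_nonneg_right (div_nonneg (Real.rpow_nonneg (hnonneg a self_mem_Ici) _) hT.le)
  have hpos : ∀ s ∈ Icc a (a + V a ^ (1 - q) / (c * (1 - q))), 0 < V s :=
    fun s hs => (hnonneg s hs.1).lt_of_ne' (hne s hs)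
  have hcmp := rpow_one_sub_sub_le_of_deriv_le_neg_mul_rpow hq hV hab hpos
    (fun s hs => hder s hs.1)
  have hb := Real.rpow_pos_of_pos (hpos _ (right_mem_Icc.2 hab)) (1 - q)
  rw [add_sub_cancel_left, neg_mul, mul_div_cancel₀ _ hT.ne'] at hcmp
  linarith

theorem eq_zero_of_deriv_le_neg_mul_rpow_sub_mul_rpow {c₁ c₂ α β : ℝ} (hα : α < 1)
    (hβ : 1 < β) (hc₁ : 0 < c₁) (hc₂ : 0 < c₂) (hV : Differentiable ℝ V)
    (hnonneg : ∀ s ∈ Ici a, 0 ≤ V s)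
    (hder : ∀ s ∈ Ici a, deriv V s ≤ -c₁ * V s ^ α - c₂ * V s ^ β) {t : ℝ}
    (ht : a + (c₁ * (1 - α))⁻¹ + (c₂ * (β - 1))⁻¹ ≤ t) : V t = 0 := by
  have hderα : ∀ s ∈ Ici a, deriv V s ≤ -c₁ * V s ^ α := fun s hs => by
    nlinarith [hder s hs, Real.rpow_nonneg (hnonneg s hs) β]
  have hderβ : ∀ s ∈ Ici a, deriv V s ≤ -c₂ * V s ^ β := fun s hs => by
    nlinarith [hder s hs, Real.rpow_nonneg (hnonneg s hs) α]
  have hanti : AntitoneOn V (Ici a) := by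
    refine antitoneOn_of_deriv_nonpos (convex_Ici a) hV.continuous.continuousOn
      hV.differentiableOn fun s hs => (hderα s (interior_subset hs)).trans ?_
    nlinarith [Real.rpow_nonneg (hnonneg s (interior_subset hs)) α]
  obtain ⟨t₁, ⟨hat₁, ht₁⟩, hV₁⟩ := exists_le_one_of_deriv_le_neg_mul_rpow hβ hc₂ hV hderβ
  have hsub : Ici t₁ ⊆ Ici a := Ici_subset_Ici.2 hat₁
  obtain ⟨t₂, ⟨ht₁t₂, ht₂⟩, hV₂⟩ := exists_eq_zero_of_deriv_le_neg_mul_rpow hα hc₁ hV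
    (fun s hs => hnonneg s (hsub hs)) (fun s hs => hderα s (hsub hs))
  have hdecay : V t₁ ^ (1 - α) / (c₁ * (1 - α)) ≤ (c₁ * (1 - α))⁻¹ := by
    rw [div_eq_mul_inv]
    exact mul_le_of_le_one_left (inv_pos.2 (mul_pos hc₁ (by linarith))).le
      (Real.rpow_le_one (hnonneg t₁ hat₁) hV₁ (by linarith))
  have ht₂t : t₂ ≤ t := by linarith
  have hat₂ : a ≤ t₂ := hat₁.trans ht₁t₂
  exact le_antisymm (hV₂ ▸ hanti hat₂ (hat₂.trans ht₂t) ht₂t) (hnonneg t (hat₂.trans ht₂t))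

end FixedTime

theorem backstepping_settling_time_general
    (t0 : ℝ) (V : ℝ → ℝ) (hV : Differentiable ℝ V)
    (hVnonneg : ∀ t, t0 ≤ t → 0 ≤ V t)
    (ζ1 ζ2 γ ι : ℝ)
    (hζ1 : 0 < ζ1) (hζ2 : 0 < ζ2) (hγ1 : γ < 1) (hι : 1 < ι)
    (hineq : ∀ t, t0 ≤ t →
      deriv V t ≤ -(2 : ℝ) ^ ((γ + 1) / 2) * ζ1 * (V t) ^ ((γ + 1) / 2)
        - (2 : ℝ) ^ ((ι + 1) / 2) * ζ2 * (V t) ^ ((ι + 1) / 2)) :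
    ∀ t, t0 + 2 / (ζ1 * (2 : ℝ) ^ ((γ + 1) / 2) * (1 - γ))
        + 2 / (ζ2 * (2 : ℝ) ^ ((ι + 1) / 2) * (ι - 1)) ≤ t → V t = 0 := by
  intro t ht
  have h2γ := Real.rpow_pos_of_pos two_pos ((γ + 1) / 2)
  have h2ι := Real.rpow_pos_of_pos two_pos ((ι + 1) / 2)
  have hsettle : t0 + (2 ^ ((γ + 1) / 2) * ζ1 * (1 - (γ + 1) / 2))⁻¹
      + (2 ^ ((ι + 1) / 2) * ζ2 * ((ι + 1) / 2 - 1))⁻¹ ≤ t := by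
    convert ht using 2
    · field_simp
      ring
    · field_simp
      ring
  refine eq_zero_of_deriv_le_neg_mul_rpow_sub_mul_rpow (by linarith) (by linarith)
    (mul_pos h2γ hζ1) (mul_pos h2ι hζ2) hV hVnonneg (fun s hs => ?_) hsettle
  simpa only [neg_mul] using hineq s hs

/-- Settling-time estimate for the composite Lyapunov function of the fixed-time
backstepping sliding mode controller (equations (B13)-(B14)). Powers are real
powers (`rpow`). -/
theorem backstepping_settling_time
    (t0 : ℝ) (V : ℝ → ℝ) (hV : Differentiable ℝ V)
    (hVnonneg : ∀ t, t0 ≤ t → 0 ≤ V t)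
    (ζ1 ζ2 γ ι : ℝ)
    (hζ1 : 0 < ζ1) (hζ2 : 0 < ζ2) (hγ0 : 0 < γ) (hγ1 : γ < 1) (hι : 1 < ι)
    (hineq : ∀ t, t0 ≤ t →
      deriv V t ≤ -(2 : ℝ) ^ ((γ + 1) / 2) * ζ1 * (V t) ^ ((γ + 1) / 2)
        - (2 : ℝ) ^ ((ι + 1) / 2) * ζ2 * (V t) ^ ((ι + 1) / 2)) :
    ∀ t, t0 + 2 / (ζ1 * (2 : ℝ) ^ ((γ + 1) / 2) * (1 - γ))
        + 2 / (ζ2 * (2 : ℝ) ^ ((ι + 1) / 2) * (ι - 1)) ≤ t → V t = 0 :=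
  backstepping_settling_time_general t0 V hV hVnonneg ζ1 ζ2 γ ι hζ1 hζ2 hγ1 hι hineq
end

section
/- Let $t_0 \in \mathbb{R}$ and let $V : \mathbb{R} \to \mathbb{R}$ be differentiable with $V(t) \ge 0$ for all $t \ge t_0$. Suppose there are constants $\chi_1 > 0$, $\chi_2 > 0$, $0 < \gamma < 1$, $\iota > 1$ and $\sigma > 0$ such that $V'(t) \le -2^{\frac{\gamma+1}{2}} \chi_1 V(t)^{\frac{\gamma+1}{2}} - 2^{\frac{\iota+1}{2}} \chi_2 V(t)^{\frac{\iota+1}{2}} + \sigma$ for all $t \ge t_0$. Then for every $\kappa$ with $0 < \kappa < 1$ and every $t \ge t_0 + \frac{2}{\chi_1 2^{\frac{\gamma+1}{2}} \kappa (1-\gamma)} + \frac{2}{\chi_2 2^{\frac{\iota+1}{2}} \kappa (\iota-1)}$ one has $V(t) \le \min\left\{ \left(\frac{\sigma}{(1-\kappa) 2^{\frac{\gamma+1}{2}} \chi_1}\right)^{\frac{2}{\gamma+1}},\ \left(\frac{\sigma}{(1-\kappa) 2^{\frac{\iota+1}{2}} \chi_2}\right)^{\frac{2}{\iota+1}} \right\}$.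 -/
/-!
Above the residual level `L`, the constant `σ` is absorbed by a `1 - κ` share of either decay
term, leaving `V' ≤ -a V ^ p` and `V' ≤ -b V ^ q` with `p = (γ + 1) / 2 < 1 < q = (ι + 1) / 2`.
Since `(V ^ (1 - r) / (1 - r))' = V' V ^ (-r)`, the function `V ^ (1 - q)` grows at rate at least
`b (q - 1)`, so `V` drops below `1` within time `1 / (b (q - 1))` whatever its initial value;
from there `V ^ (1 - p)` decreases from at most `1` at rate at least `a (1 - p)`, so `V` reaches
`L` within a further `1 / (a (1 - p))`. As `V' < 0` above `L`, it then stays below `L`.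
-/

open Set

theorem mul_sub_le_of_deriv_le_neg_mul_rpow {V : ℝ → ℝ} {x y c r : ℝ} (hr : r ≠ 1) (hxy : x ≤ y)
    (hV : ∀ s ∈ Icc x y, DifferentiableAt ℝ V s) (hpos : ∀ s ∈ Icc x y, 0 < V s)
    (hder : ∀ s ∈ Icc x y, deriv V s ≤ -(c * V s ^ r)) :
    c * (y - x) ≤ (V x ^ (1 - r) - V y ^ (1 - r)) / (1 - r) := by
  have hr' : 1 - r ≠ 0 := sub_ne_zero.2 hr.symm
  have hg : ∀ s ∈ Icc x y,
      HasDerivAt (fun u => V u ^ (1 - r) / (1 - r)) (deriv V s * V s ^ (-r)) s := by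
    intro s hs
    refine (((hV s hs).hasDerivAt.rpow_const (p := 1 - r)
      (Or.inl (hpos s hs).ne')).div_const (1 - r)).congr_deriv ?_
    rw [sub_sub_cancel_left]
    field_simp
  have hg_le : ∀ s ∈ interior (Icc x y), deriv (fun u => V u ^ (1 - r) / (1 - r)) s ≤ -c := by
    intro s hs
    have hs' := interior_subset hs
    have hVr : 0 < V s ^ (-r) := Real.rpow_pos_of_pos (hpos s hs') _
    have hVr_mul : V s ^ r * V s ^ (-r) = 1 := by
      rw [← Real.rpow_add (hpos s hs'), add_neg_cancel, Real.rpow_zero]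
    calc deriv (fun u => V u ^ (1 - r) / (1 - r)) s = deriv V s * V s ^ (-r) := (hg s hs').deriv
      _ ≤ -(c * V s ^ r) * V s ^ (-r) := mul_le_mul_of_nonneg_right (hder s hs') hVr.le
      _ = -c := by rw [neg_mul, mul_assoc, hVr_mul, mul_one]
  have := (convex_Icc x y).image_sub_le_mul_sub_of_deriv_le
    (fun s hs => (hg s hs).continuousAt.continuousWithinAt)
    (fun s hs => (hg s (interior_subset hs)).differentiableAt.differentiableWithinAt)
    hg_le x (left_mem_Icc.2 hxy) y (right_mem_Icc.2 hxy) hxy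
  rw [sub_div]
  linarith

theorem sub_lt_of_deriv_le_neg_mul_rpow_of_one_lt {V : ℝ → ℝ} {x y b q : ℝ} (hb : 0 < b)
    (hq : 1 < q) (hxy : x ≤ y) (hV : ∀ s ∈ Icc x y, DifferentiableAt ℝ V s)
    (hpos : ∀ s ∈ Icc x y, 0 < V s) (hder : ∀ s ∈ Icc x y, deriv V s ≤ -(b * V s ^ q))
    (hy : 1 ≤ V y) : y - x < 1 / (b * (q - 1)) := by
  have key := (le_div_iff_of_neg (sub_neg.2 hq)).1
    (mul_sub_le_of_deriv_le_neg_mul_rpow hq.ne' hxy hV hpos hder)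
  have hVx : 0 < V x ^ (1 - q) := Real.rpow_pos_of_pos (hpos x (left_mem_Icc.2 hxy)) _
  have hVy : V y ^ (1 - q) ≤ 1 := Real.rpow_le_one_of_one_le_of_nonpos hy (by linarith)
  rw [lt_div_iff₀ (mul_pos hb (sub_pos.2 hq))]
  linarith

theorem sub_lt_of_deriv_le_neg_mul_rpow_of_lt_one {V : ℝ → ℝ} {x y a p : ℝ} (ha : 0 < a)
    (hp : p < 1) (hxy : x ≤ y) (hV : ∀ s ∈ Icc x y, DifferentiableAt ℝ V s)
    (hpos : ∀ s ∈ Icc x y, 0 < V s) (hder : ∀ s ∈ Icc x y, deriv V s ≤ -(a * V s ^ p))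
    (hx : V x ≤ 1) : y - x < 1 / (a * (1 - p)) := by
  have key := (le_div_iff₀ (sub_pos.2 hp)).1
    (mul_sub_le_of_deriv_le_neg_mul_rpow hp.ne hxy hV hpos hder)
  have hVx : V x ^ (1 - p) ≤ 1 :=
    Real.rpow_le_one (hpos x (left_mem_Icc.2 hxy)).le hx (by linarith)
  have hVy : 0 < V y ^ (1 - p) := Real.rpow_pos_of_pos (hpos y (right_mem_Icc.2 hxy)) _
  rw [lt_div_iff₀ (mul_pos ha (sub_pos.2 hp))]
  linarith

theorem le_of_deriv_neg_of_lt {V : ℝ → ℝ} {s u L : ℝ} (hsu : s ≤ u)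
    (hV : ∀ r ∈ Icc s u, DifferentiableAt ℝ V r) (hder : ∀ r ∈ Icc s u, L < V r → deriv V r < 0)
    (hs : V s ≤ L) : V u ≤ L := by
  -- Compare with the constant barrier `L + ε`, which `V` can only reach while decreasing.
  refine le_of_forall_pos_le_add fun ε hε => ?_
  exact image_le_of_deriv_right_lt_deriv_boundary' (B := fun _ => L + ε) (B' := 0)
    (fun r hr => (hV r hr).continuousAt.continuousWithinAt)
    (fun r hr => (hV r (Ico_subset_Icc_self hr)).hasDerivAt.hasDerivWithinAt)
    (by linarith) continuousOn_const (fun r _ => hasDerivWithinAt_const r _ _)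
    (fun r hr hVr => hder r (Ico_subset_Icc_self hr) (by linarith)) (right_mem_Icc.2 hsu)

theorem le_of_deriv_le_neg_mul_rpow_of_lt {V : ℝ → ℝ} {t₀ a b p q L : ℝ} (ha : 0 < a)
    (hb : 0 < b) (hp : p < 1) (hq : 1 < q) (hL : 0 ≤ L)
    (hV : ∀ s, t₀ ≤ s → DifferentiableAt ℝ V s)
    (hder : ∀ s, t₀ ≤ s → L < V s → deriv V s ≤ -(a * V s ^ p) ∧ deriv V s ≤ -(b * V s ^ q))
    {t : ℝ} (ht : t₀ + 1 / (a * (1 - p)) + 1 / (b * (q - 1)) ≤ t) : V t ≤ L := by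
  set T₁ := t₀ + 1 / (b * (q - 1)) with hT₁
  set T₂ := T₁ + 1 / (a * (1 - p)) with hT₂
  have hpq : 0 < 1 / (a * (1 - p)) ∧ 0 < 1 / (b * (q - 1)) :=
    ⟨one_div_pos.2 (mul_pos ha (sub_pos.2 hp)), one_div_pos.2 (mul_pos hb (sub_pos.2 hq))⟩
  have h₀₁ : t₀ ≤ T₁ := by linarith
  have h₁₂ : T₁ ≤ T₂ := by linarith
  obtain ⟨s, hs, hVs⟩ : ∃ s ∈ Icc t₀ T₂, V s ≤ L := by
    by_contra! hgt
    have hpos : ∀ s ∈ Icc t₀ T₂, 0 < V s := fun s hs => hL.trans_lt (hgt s hs)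
    have hsub₁ : Icc t₀ T₁ ⊆ Icc t₀ T₂ := Icc_subset_Icc_right h₁₂
    have hsub₂ : Icc T₁ T₂ ⊆ Icc t₀ T₂ := Icc_subset_Icc_left h₀₁
    have hV₁ : V T₁ < 1 := by
      by_contra! h
      refine (sub_lt_of_deriv_le_neg_mul_rpow_of_one_lt hb hq h₀₁ (fun s hs => hV s hs.1)
        (fun s hs => hpos s (hsub₁ hs)) (fun s hs => (hder s hs.1 (hgt s (hsub₁ hs))).2) h).ne ?_
      rw [hT₁, add_sub_cancel_left]
    refine (sub_lt_of_deriv_le_neg_mul_rpow_of_lt_one ha hp h₁₂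
      (fun s hs => hV s (hsub₂ hs).1) (fun s hs => hpos s (hsub₂ hs))
      (fun s hs => (hder s (hsub₂ hs).1 (hgt s (hsub₂ hs))).1) hV₁.le).ne ?_
    rw [hT₂, add_sub_cancel_left]
  refine le_of_deriv_neg_of_lt (hs.2.trans (by linarith)) (fun r hr => hV r (hs.1.trans hr.1))
    (fun r hr hLr => (hder r (hs.1.trans hr.1) hLr).1.trans_lt ?_) hVs
  exact neg_neg_of_pos (mul_pos ha (Real.rpow_pos_of_pos (hL.trans_lt hLr) p))

theorem lt_mul_rpow_of_rpow_inv_lt {σ c p v : ℝ} (hσ : 0 ≤ σ) (hc : 0 < c) (hp : 0 < p)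
    (h : (σ / c) ^ p⁻¹ < v) : σ < c * v ^ p := by
  have hσc : 0 ≤ σ / c := div_nonneg hσ hc.le
  rw [← div_lt_iff₀' hc]
  exact (Real.rpow_inv_lt_iff_of_pos hσc ((Real.rpow_nonneg hσc _).trans h.le) hp).1 h

theorem deriv_le_neg_mul_rpow_of_min_lt {d v w₁ w₂ χ₁ χ₂ p q σ κ : ℝ} (hw₁ : 0 < w₁)
    (hw₂ : 0 < w₂) (hχ₁ : 0 < χ₁) (hχ₂ : 0 < χ₂) (hp : 0 < p) (hq : 0 < q) (hσ : 0 ≤ σ)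
    (hκ₀ : 0 < κ) (hκ₁ : κ < 1) (hd : d ≤ -w₁ * χ₁ * v ^ p - w₂ * χ₂ * v ^ q + σ)
    (hv : min ((σ / ((1 - κ) * w₁ * χ₁)) ^ p⁻¹) ((σ / ((1 - κ) * w₂ * χ₂)) ^ q⁻¹) < v) :
    d ≤ -(κ * (w₁ * χ₁) * v ^ p) ∧ d ≤ -(κ * (w₂ * χ₂) * v ^ q) := by
  have hκ : 0 < 1 - κ := sub_pos.2 hκ₁
  have hv₀ : 0 ≤ v := (le_min (Real.rpow_nonneg (by positivity) _)
    (Real.rpow_nonneg (by positivity) _)).trans hv.le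
  have hX : 0 ≤ w₁ * χ₁ * v ^ p := by positivity
  have hY : 0 ≤ w₂ * χ₂ * v ^ q := by positivity
  have hσ_le : σ ≤ (1 - κ) * (w₁ * χ₁ * v ^ p + w₂ * χ₂ * v ^ q) := by
    rcases min_lt_iff.1 hv with h | h
    · linarith [lt_mul_rpow_of_rpow_inv_lt hσ (by positivity) hp h, mul_nonneg hκ.le hY]
    · linarith [lt_mul_rpow_of_rpow_inv_lt hσ (by positivity) hq h, mul_nonneg hκ.le hX]
  constructor
  · linarith [mul_nonneg hκ₀.le hY]
  · linarith [mul_nonneg hκ₀.le hX]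

theorem adaptive_fuzzy_practical_fixed_time_general
    (t0 : ℝ) (V : ℝ → ℝ) (hV : Differentiable ℝ V)
    (χ1 χ2 γ ι σ : ℝ)
    (hχ1 : 0 < χ1) (hχ2 : 0 < χ2) (hγ0 : 0 < γ) (hγ1 : γ < 1) (hι : 1 < ι)
    (hσ : 0 < σ)
    (hineq : ∀ t, t0 ≤ t →
      deriv V t ≤ -(2 : ℝ) ^ ((γ + 1) / 2) * χ1 * (V t) ^ ((γ + 1) / 2)
        - (2 : ℝ) ^ ((ι + 1) / 2) * χ2 * (V t) ^ ((ι + 1) / 2) + σ) :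
    ∀ κ : ℝ, 0 < κ → κ < 1 →
      ∀ t, t0 + 2 / (χ1 * (2 : ℝ) ^ ((γ + 1) / 2) * κ * (1 - γ))
          + 2 / (χ2 * (2 : ℝ) ^ ((ι + 1) / 2) * κ * (ι - 1)) ≤ t →
        V t ≤ min ((σ / ((1 - κ) * (2 : ℝ) ^ ((γ + 1) / 2) * χ1)) ^ (2 / (γ + 1)))
                  ((σ / ((1 - κ) * (2 : ℝ) ^ ((ι + 1) / 2) * χ2)) ^ (2 / (ι + 1))) := by
  intro κ hκ₀ hκ₁ t ht
  set p := (γ + 1) / 2 with hp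
  set q := (ι + 1) / 2 with hq
  rw [show 2 / (γ + 1) = p⁻¹ from (inv_div _ _).symm,
    show 2 / (ι + 1) = q⁻¹ from (inv_div _ _).symm]
  have hp₀ : 0 < p := by linarith
  have hq₀ : 0 < q := by linarith
  refine le_of_deriv_le_neg_mul_rpow_of_lt (a := κ * (2 ^ p * χ1)) (b := κ * (2 ^ q * χ2))
    (by positivity) (by positivity) (by linarith) (by linarith)
    (le_min (Real.rpow_nonneg (by positivity) _) (Real.rpow_nonneg (by positivity) _))
    (fun s _ => hV s) (fun s hs hv => deriv_le_neg_mul_rpow_of_min_lt (by positivity)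
      (by positivity) hχ1 hχ2 hp₀ hq₀ hσ.le hκ₀ hκ₁ (hineq s hs) hv) (ht.trans' (le_of_eq ?_))
  rw [show 1 - p = (1 - γ) / 2 by linarith, show q - 1 = (ι - 1) / 2 by linarith]
  field_simp

/-- Practical fixed-time convergence estimate for the composite Lyapunov function of
the saturated adaptive fuzzy backstepping controller (equations (59)-(60)). Powers
are real powers (`rpow`). -/
theorem adaptive_fuzzy_practical_fixed_time
    (t0 : ℝ) (V : ℝ → ℝ) (hV : Differentiable ℝ V)
    (hVnonneg : ∀ t, t0 ≤ t → 0 ≤ V t)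
    (χ1 χ2 γ ι σ : ℝ)
    (hχ1 : 0 < χ1) (hχ2 : 0 < χ2) (hγ0 : 0 < γ) (hγ1 : γ < 1) (hι : 1 < ι)
    (hσ : 0 < σ)
    (hineq : ∀ t, t0 ≤ t →
      deriv V t ≤ -(2 : ℝ) ^ ((γ + 1) / 2) * χ1 * (V t) ^ ((γ + 1) / 2)
        - (2 : ℝ) ^ ((ι + 1) / 2) * χ2 * (V t) ^ ((ι + 1) / 2) + σ) :
    ∀ κ : ℝ, 0 < κ → κ < 1 →
      ∀ t, t0 + 2 / (χ1 * (2 : ℝ) ^ ((γ + 1) / 2) * κ * (1 - γ))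
          + 2 / (χ2 * (2 : ℝ) ^ ((ι + 1) / 2) * κ * (ι - 1)) ≤ t →
        V t ≤ min ((σ / ((1 - κ) * (2 : ℝ) ^ ((γ + 1) / 2) * χ1)) ^ (2 / (γ + 1)))
                  ((σ / ((1 - κ) * (2 : ℝ) ^ ((ι + 1) / 2) * χ2)) ^ (2 / (ι + 1))) :=
  adaptive_fuzzy_practical_fixed_time_general t0 V hV χ1 χ2 γ ι σ hχ1 hχ2 hγ0 hγ1 hι hσ hineq
end

section
/- Let $t_0 \in \mathbb{R}$, let $\beta > \tilde{\lambda} \ge 0$, $k_8 \ge 0$, $k_9, k_{10} > 0$, $0 < \gamma < 1$, $\iota > 1$, and let $s : \mathbb{R} \to \mathbb{R}$ be differentiable and satisfy, for all $t \ge t_0$, $s(t)\,s'(t) \le -(\beta - \tilde{\lambda})|s(t)| - k_8 s(t)^2 - k_9 |s(t)|^{\gamma+1} - k_{10} |s(t)|^{\iota+1}$. Then $s(t) = 0$ for every $t \ge t_0 + \frac{2}{2^{\frac{\gamma+1}{2}} k_9 (1-\gamma)} + \frac{2}{2^{\frac{\iota+1}{2}} k_{10} (\iota-1)}$. -/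
/-!
With `V = s ^ 2 / 2`, the two fractional-power terms give `V' ≤ -K V ^ q` for an exponent
`q = (ι + 1) / 2 > 1` and for `q = (γ + 1) / 2 < 1`; the switching and linear terms only help.
For any `q ≠ 1`, `V ^ (1 - q) / (1 - q) + K t` is nonincreasing while `V > 0`. For `q > 1` this
forces `V ≤ 1` after time `1 / (K (q - 1))` whatever `V` was initially; for `q < 1` it then
drives `V` to zero within a further `1 / (K (1 - q))`.
-/

open Set

theorem antitoneOn_of_hasDerivAt_nonpos {D : Set ℝ} (hD : Convex ℝ D) {f f' : ℝ → ℝ}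
    (hf : ∀ x ∈ D, HasDerivAt f (f' x) x) (hf'₀ : ∀ x ∈ D, f' x ≤ 0) : AntitoneOn f D :=
  antitoneOn_of_hasDerivWithinAt_nonpos hD
    (fun x hx ↦ (hf x hx).continuousAt.continuousWithinAt)
    (fun x hx ↦ (hf x (interior_subset hx)).hasDerivWithinAt)
    fun x hx ↦ hf'₀ x (interior_subset hx)

section RpowDecay

variable {V V' : ℝ → ℝ} {a K q : ℝ}

theorem antitoneOn_rpow_one_sub_div_add_mul_s7 {b : ℝ} (hq : q ≠ 1)
    (hV : ∀ t ∈ Icc a b, HasDerivAt V (V' t) t) (hpos : ∀ t ∈ Icc a b, 0 < V t)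
    (hV' : ∀ t ∈ Icc a b, V' t ≤ -K * V t ^ q) :
    AntitoneOn (fun t ↦ V t ^ (1 - q) / (1 - q) + K * t) (Icc a b) := by
  refine antitoneOn_of_hasDerivAt_nonpos (convex_Icc a b)
    (f' := fun t ↦ V t ^ (-q) * V' t + K) (fun t ht ↦ ?_) fun t ht ↦ ?_
  · refine ((((hV t ht).rpow_const (Or.inl (hpos t ht).ne')).div_const (1 - q)).add
      ((hasDerivAt_id t).const_mul K)).congr_deriv ?_
    rw [sub_sub_cancel_left]
    field_simp
  · have hVq : V t ^ (-q) * V t ^ q = 1 := by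
      rw [← Real.rpow_add (hpos t ht), neg_add_cancel, Real.rpow_zero]
    calc V t ^ (-q) * V' t + K ≤ V t ^ (-q) * (-K * V t ^ q) + K := by
          gcongr
          · exact (Real.rpow_pos_of_pos (hpos t ht) _).le
          · exact hV' t ht
      _ = 0 := by linear_combination (-K) * hVq

variable (hK : 0 < K) (hV : ∀ t ∈ Ici a, HasDerivAt V (V' t) t)
  (hV₀ : ∀ t ∈ Ici a, 0 ≤ V t) (hV' : ∀ t ∈ Ici a, V' t ≤ -K * V t ^ q)
include hK hV hV₀ hV'

theorem antitoneOn_Ici_of_hasDerivAt_le_neg_rpow : AntitoneOn V (Ici a) :=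
  antitoneOn_of_hasDerivAt_nonpos (convex_Ici a) hV fun t ht ↦
    (hV' t ht).trans <| by
      have := Real.rpow_nonneg (hV₀ t ht) q
      nlinarith

theorem mul_sub_le_rpow_one_sub_sub_div {t : ℝ} (hq : q ≠ 1) (hat : a ≤ t)
    (hpos : 0 < V t) : K * (t - a) ≤ (V a ^ (1 - q) - V t ^ (1 - q)) / (1 - q) := by
  have hanti := antitoneOn_Ici_of_hasDerivAt_le_neg_rpow hK hV hV₀ hV'
  have := antitoneOn_rpow_one_sub_div_add_mul_s7 hq (fun u hu ↦ hV u hu.1)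
    (fun u hu ↦ hpos.trans_le (hanti hu.1 hat hu.2)) (fun u hu ↦ hV' u hu.1)
    (left_mem_Icc.2 hat) (right_mem_Icc.2 hat) hat
  rw [sub_div]
  linarith

theorem eq_zero_of_hasDerivAt_le_neg_rpow (hq : q < 1) (t : ℝ)
    (ht : a + V a ^ (1 - q) / (K * (1 - q)) ≤ t) : V t = 0 := by
  have hc : 0 < K * (1 - q) := mul_pos hK (by linarith)
  have hat : a ≤ t := le_trans (le_add_of_nonneg_right
    (div_nonneg (Real.rpow_nonneg (hV₀ a (le_refl a)) _) hc.le)) ht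
  by_contra hne
  have hVt : 0 < V t := (hV₀ t hat).lt_of_ne' hne
  have key := mul_sub_le_rpow_one_sub_sub_div hK hV hV₀ hV' hq.ne hat hVt
  rw [le_div_iff₀ (by linarith)] at key
  rw [← le_sub_iff_add_le', div_le_iff₀ hc] at ht
  have := Real.rpow_pos_of_pos hVt (1 - q)
  linarith

theorem le_one_of_hasDerivAt_le_neg_rpow (hq : 1 < q) (t : ℝ)
    (ht : a + 1 / (K * (q - 1)) ≤ t) : V t ≤ 1 := by
  have hc : 0 < K * (q - 1) := mul_pos hK (by linarith)
  have hat : a ≤ t := le_trans (le_add_of_nonneg_right (by positivity)) ht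
  by_contra! hVt
  have key := mul_sub_le_rpow_one_sub_sub_div hK hV hV₀ hV' hq.ne' hat (one_pos.trans hVt)
  rw [← neg_div_neg_eq, neg_sub, neg_sub, le_div_iff₀ (by linarith)] at key
  rw [← le_sub_iff_add_le', div_le_iff₀ hc] at ht
  have := Real.rpow_lt_one_of_one_lt_of_neg hVt (by linarith : 1 - q < 0)
  have := Real.rpow_pos_of_pos (one_pos.trans (hVt.trans_le
    (antitoneOn_Ici_of_hasDerivAt_le_neg_rpow hK hV hV₀ hV' (le_refl a) hat hat))) (1 - q)
  linarith

end RpowDecay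

theorem abs_rpow_eq_two_rpow_mul_sq_div_two_rpow (x p : ℝ) :
    |x| ^ p = 2 ^ (p / 2) * (x ^ 2 / 2) ^ (p / 2) := by
  rw [← Real.mul_rpow zero_le_two (by positivity), mul_div_cancel₀ _ two_ne_zero, ← sq_abs,
    ← Real.rpow_two, ← Real.rpow_mul (abs_nonneg x), mul_div_cancel₀ _ two_ne_zero]

theorem HasDerivAt.sq_div_two {s : ℝ → ℝ} {s' x : ℝ} (h : HasDerivAt s s' x) :
    HasDerivAt (fun t ↦ s t ^ 2 / 2) (s x * s') x :=
  ((h.pow 2).div_const 2).congr_deriv (by push_cast; ring)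

section SlidingVariable

variable {s : ℝ → ℝ} {a k e : ℝ}

theorem mul_deriv_le_neg_mul_sq_div_two_rpow {x d : ℝ} (h : x * d ≤ -k * |x| ^ (e + 1)) :
    x * d ≤ -(k * 2 ^ ((e + 1) / 2)) * (x ^ 2 / 2) ^ ((e + 1) / 2) := by
  rw [abs_rpow_eq_two_rpow_mul_sq_div_two_rpow] at h
  linarith

variable (hs : Differentiable ℝ s) (hk : 0 < k)
  (h : ∀ t ∈ Ici a, s t * deriv s t ≤ -k * |s t| ^ (e + 1))
include hs hk h

theorem sq_div_two_le_one_of_mul_deriv_le (he : 1 < e) (t : ℝ)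
    (ht : a + 2 / ((2 : ℝ) ^ ((e + 1) / 2) * k * (e - 1)) ≤ t) : s t ^ 2 / 2 ≤ 1 :=
  le_one_of_hasDerivAt_le_neg_rpow (V := fun t ↦ s t ^ 2 / 2) (by positivity)
    (fun t _ ↦ (hs t).hasDerivAt.sq_div_two) (fun t _ ↦ by positivity)
    (fun t ht ↦ mul_deriv_le_neg_mul_sq_div_two_rpow (h t ht)) (by linarith) t <| by
      convert ht using 2
      field_simp
      ring

theorem eq_zero_of_mul_deriv_le (he : e < 1) (ha : s a ^ 2 / 2 ≤ 1) (t : ℝ)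
    (ht : a + 2 / ((2 : ℝ) ^ ((e + 1) / 2) * k * (1 - e)) ≤ t) : s t = 0 := by
  have hc : 0 < k * 2 ^ ((e + 1) / 2) * (1 - (e + 1) / 2) :=
    mul_pos (by positivity) (by linarith)
  have hst := eq_zero_of_hasDerivAt_le_neg_rpow (V := fun t ↦ s t ^ 2 / 2) (by positivity)
    (fun t _ ↦ (hs t).hasDerivAt.sq_div_two) (fun t _ ↦ by positivity)
    (fun t ht ↦ mul_deriv_le_neg_mul_sq_div_two_rpow (h t ht)) (by linarith) t <| calc
      a + (s a ^ 2 / 2) ^ (1 - (e + 1) / 2) / (k * 2 ^ ((e + 1) / 2) * (1 - (e + 1) / 2))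
        ≤ a + 1 / (k * 2 ^ ((e + 1) / 2) * (1 - (e + 1) / 2)) := by
          gcongr
          exact Real.rpow_le_one (by positivity) ha (by linarith)
      _ = a + 2 / ((2 : ℝ) ^ ((e + 1) / 2) * k * (1 - e)) := by
          field_simp
          ring
      _ ≤ t := ht
  simpa using hst

end SlidingVariable

theorem sliding_mode_fixed_time_reaching_general
    (t0 : ℝ) (β lam k8 k9 k10 γ ι : ℝ)
    (hβ : lam < β) (hk8 : 0 ≤ k8) (hk9 : 0 < k9) (hk10 : 0 < k10)
    (hγ1 : γ < 1) (hι : 1 < ι)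
    (s : ℝ → ℝ) (hs : Differentiable ℝ s)
    (hineq : ∀ t, t0 ≤ t →
      s t * deriv s t ≤ -(β - lam) * |s t| - k8 * (s t) ^ 2
        - k9 * |s t| ^ (γ + 1) - k10 * |s t| ^ (ι + 1)) :
    ∀ t, t0 + 2 / ((2 : ℝ) ^ ((γ + 1) / 2) * k9 * (1 - γ))
        + 2 / ((2 : ℝ) ^ ((ι + 1) / 2) * k10 * (ι - 1)) ≤ t → s t = 0 := by
  intro t ht
  have hdecay : ∀ u ∈ Ici t0, s u * deriv s u ≤ -k9 * |s u| ^ (γ + 1) ∧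
      s u * deriv s u ≤ -k10 * |s u| ^ (ι + 1) := fun u hu ↦ by
    have := hineq u hu
    have := mul_nonneg (sub_nonneg.2 hβ.le) (abs_nonneg (s u))
    have := mul_nonneg hk8 (sq_nonneg (s u))
    have := mul_nonneg hk9.le (Real.rpow_nonneg (abs_nonneg (s u)) (γ + 1))
    have := mul_nonneg hk10.le (Real.rpow_nonneg (abs_nonneg (s u)) (ι + 1))
    constructor <;> linarith
  have hT : 0 ≤ 2 / ((2 : ℝ) ^ ((ι + 1) / 2) * k10 * (ι - 1)) :=
    div_nonneg zero_le_two (mul_nonneg (by positivity) (by linarith))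
  have hreach := sq_div_two_le_one_of_mul_deriv_le hs hk10 (fun u hu ↦ (hdecay u hu).2) hι _
    le_rfl
  exact eq_zero_of_mul_deriv_le hs hk9
    (fun u hu ↦ (hdecay u ((le_add_of_nonneg_right hT).trans hu)).1) hγ1 hreach t (by linarith)

/-- Fixed-time reaching property of the second backstepping sliding mode step under
a matched bounded disturbance (equations (B11)-(B12), (B14)): the closed-loop sliding
variable satisfying the Lyapunov-type product inequality converges to zero within a
time independent of the initial condition. Powers are real powers (`rpow`). -/
theorem sliding_mode_fixed_time_reaching
    (t0 : ℝ) (β lam k8 k9 k10 γ ι : ℝ)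
    (hlam : 0 ≤ lam) (hβ : lam < β) (hk8 : 0 ≤ k8) (hk9 : 0 < k9) (hk10 : 0 < k10)
    (hγ0 : 0 < γ) (hγ1 : γ < 1) (hι : 1 < ι)
    (s : ℝ → ℝ) (hs : Differentiable ℝ s)
    (hineq : ∀ t, t0 ≤ t →
      s t * deriv s t ≤ -(β - lam) * |s t| - k8 * (s t) ^ 2
        - k9 * |s t| ^ (γ + 1) - k10 * |s t| ^ (ι + 1)) :
    ∀ t, t0 + 2 / ((2 : ℝ) ^ ((γ + 1) / 2) * k9 * (1 - γ))
        + 2 / ((2 : ℝ) ^ ((ι + 1) / 2) * k10 * (ι - 1)) ≤ t → s t = 0 :=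
  sliding_mode_fixed_time_reaching_general t0 β lam k8 k9 k10 γ ι hβ hk8 hk9 hk10 hγ1 hι s hs hineq
end

section
/- Let $\tau_{\max} > 0$ and define the saturation function $\mathrm{sat}(x) = x$ if $|x| < \tau_{\max}$ and $\mathrm{sat}(x) = \mathrm{sign}(x)\,\tau_{\max}$ if $|x| \ge \tau_{\max}$. Then for every $x \in \mathbb{R}$, $\left| \mathrm{sat}(x) - \tau_{\max} \tanh\!\left(\frac{x}{\tau_{\max}}\right) \right| \le \tau_{\max}\,(1 - \tanh 1)$. -/
/-!
Scaling by `τmax` reduces the claim to `τmax = 1`, and the error is odd, so it suffices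
to take `0 ≤ u`. Since `tanh' = cosh⁻² ≤ 1`, the error `u - tanh u` increases from `0` on `[0, 1]`,
and for `u ≥ 1` the error `1 - tanh u` decreases from `1 - tanh 1`; the maximum is at the kink `u = 1`.
-/

open Real

namespace Real

theorem hasDerivAt_tanh (x : ℝ) : HasDerivAt tanh (cosh x ^ 2)⁻¹ x := by
  have h := (hasDerivAt_sinh x).div (hasDerivAt_cosh x) (cosh_pos x).ne'
  rw [← sq, ← sq, cosh_sq_sub_sinh_sq, one_div] at h
  rwa [show sinh / cosh = tanh from funext fun y => (tanh_eq_sinh_div_cosh y).symm] at h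

theorem tanh_strictMono : StrictMono tanh :=
  strictMono_of_deriv_pos fun x => by rw [(hasDerivAt_tanh x).deriv]; positivity

theorem monotone_id_sub_tanh : Monotone fun x => x - tanh x := by
  have hderiv (x : ℝ) : HasDerivAt (fun x => x - tanh x) (1 - (cosh x ^ 2)⁻¹) x :=
    (hasDerivAt_id x).sub (hasDerivAt_tanh x)
  refine monotone_of_deriv_nonneg (fun x => (hderiv x).differentiableAt) fun x => ?_
  rw [(hderiv x).deriv, sub_nonneg]
  exact inv_le_one_of_one_le₀ (one_le_pow₀ (one_le_cosh x))

theorem abs_sub_tanh_le_one_sub_tanh_one {x : ℝ} (hx : |x| ≤ 1) :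
    |x - tanh x| ≤ 1 - tanh 1 := by
  wlog h₀ : 0 ≤ x generalizing x
  · have := this (x := -x) (by rwa [abs_neg]) (by linarith)
    rwa [tanh_neg, neg_sub_neg, abs_sub_comm] at this
  have h₁ : x ≤ 1 := (abs_le.mp hx).2
  have hlow : 0 ≤ x - tanh x := by simpa using monotone_id_sub_tanh h₀
  rw [abs_of_nonneg hlow]
  exact monotone_id_sub_tanh h₁

theorem abs_sign_sub_tanh_le_one_sub_tanh_one {x : ℝ} (hx : 1 ≤ |x|) :
    |sign x - tanh x| ≤ 1 - tanh 1 := by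
  wlog h₀ : 0 ≤ x generalizing x
  · have := this (x := -x) (by rwa [abs_neg]) (by linarith)
    rwa [tanh_neg, sign_neg, neg_sub_neg, abs_sub_comm] at this
  have h₁ : 1 ≤ x := by rwa [abs_of_nonneg h₀] at hx
  rw [sign_of_pos (by linarith), abs_of_pos (by linarith [tanh_lt_one x])]
  linarith [tanh_strictMono.monotone h₁]

theorem sign_div_of_pos {x c : ℝ} (hc : 0 < c) : sign (x / c) = sign x := by
  rcases lt_trichotomy x 0 with hx | rfl | hx
  · rw [sign_of_neg hx, sign_of_neg (div_neg_of_neg_of_pos hx hc)]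
  · rw [zero_div]
  · rw [sign_of_pos hx, sign_of_pos (div_pos hx hc)]

end Real

/-- Input-saturation approximation bound (equations (B15)-(B18)): the hard
saturation with level `τmax` is approximated by `g(x) = τmax * tanh (x / τmax)`
with uniform error at most `τmax * (1 - tanh 1)`. Here `Real.sign x` is `1` for
`x > 0`, `-1` for `x < 0`, and `0` for `x = 0`. -/
theorem saturation_tanh_approx
    (τmax : ℝ) (hτ : 0 < τmax)
    (sat : ℝ → ℝ)
    (hsat : ∀ x, sat x = if |x| < τmax then x else Real.sign x * τmax) :
    ∀ x : ℝ, |sat x - τmax * Real.tanh (x / τmax)| ≤ τmax * (1 - Real.tanh 1) := by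
  intro x
  have hscale (a : ℝ) : |a * τmax - τmax * tanh (x / τmax)| = τmax * |a - tanh (x / τmax)| := by
    rw [← abs_of_pos hτ, ← abs_mul, abs_of_pos hτ, mul_sub, mul_comm]
  have habs : |x / τmax| = |x| / τmax := by rw [abs_div, abs_of_pos hτ]
  rw [hsat]
  split_ifs with h
  · nth_rw 1 [← div_mul_cancel₀ x hτ.ne']
    rw [hscale]
    gcongr
    exact abs_sub_tanh_le_one_sub_tanh_one (by rw [habs, div_le_one hτ]; exact h.le)
  · rw [hscale, ← sign_div_of_pos hτ]
    gcongr
    exact abs_sign_sub_tanh_le_one_sub_tanh_one (by rw [habs, one_le_div hτ]; exact not_lt.mp h)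
end

section
/- Let $n \ge 1$, let $\Omega \subseteq \mathbb{R}^n$ be compact, let $f : \mathbb{R}^n \to \mathbb{R}$ be continuous, and let $\varepsilon > 0$. Then there exist $h \ge 1$, weights $w \in \mathbb{R}^h$, centers $c_1, \dots, c_h \in \mathbb{R}^n$ and a width $\sigma > 0$ such that, defining $p_j(Z) = \prod_{i=1}^{n} \exp\!\left(-\frac{(Z_i - (c_j)_i)^2}{\sigma^2}\right)$ for $j = 1,\dots,h$, one has for every $Z \in \Omega$: $\sum_{j=1}^{h} p_j(Z) > 0$ and $\left| f(Z) - \frac{\sum_{j=1}^{h} w_j\, p_j(Z)}{\sum_{j=1}^{h} p_j(Z)} \right| \le \varepsilon$. -/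
/-! The fuzzy basis is a normalized Gaussian kernel for the Euclidean distance:
`∏ i, exp (-(Z i - c i) ^ 2 / σ ^ 2) = exp (-‖Z - c‖ ^ 2 / σ ^ 2)`. Take the centers to be a finite
`ρ / 2`-net of `Ω`, where `f` varies by at most `ε / 2` on pairs at distance `< ρ`, and the weights
to be the values of `f` at the centers. Centers within `ρ` of `Z` then contribute an error of at
most `ε / 2` to the normalized average. The kernel of a center at distance `≥ ρ` is at most
`exp (-(ρ / 2) ^ 2 / σ ^ 2)` times that of the nearest center, so for `σ` small enough the far
centers, whose values differ from `f Z` by at most the diameter of `f '' Ω`, add less than `ε / 2`.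
-/

open Real Finset Metric

section WeightedAverage

variable {ι : Type*} {t : Finset ι} {q w : ι → ℝ} {a η θ : ℝ}

theorem abs_sub_weighted_average_le (hq : ∀ j ∈ t, 0 ≤ q j) (hS : 0 < ∑ j ∈ t, q j)
    (hterm : ∀ j ∈ t, |a - w j| * q j ≤ η * q j + θ * ∑ j ∈ t, q j) :
    |a - (∑ j ∈ t, w j * q j) / ∑ j ∈ t, q j| ≤ η + #t * θ := by
  set S := ∑ j ∈ t, q j
  have hdiff : a - (∑ j ∈ t, w j * q j) / S = (∑ j ∈ t, (a - w j) * q j) / S := by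
    rw [sub_div' hS.ne', mul_sum, ← sum_sub_distrib]
    simp only [sub_mul]
  rw [hdiff, abs_div, abs_of_pos hS, div_le_iff₀ hS]
  calc |∑ j ∈ t, (a - w j) * q j|
      ≤ ∑ j ∈ t, |a - w j| * q j := by
        refine (abs_sum_le_sum_abs _ _).trans (sum_le_sum fun j hj => ?_)
        rw [abs_mul, abs_of_nonneg (hq j hj)]
    _ ≤ ∑ j ∈ t, (η * q j + θ * S) := sum_le_sum hterm
    _ = (η + #t * θ) * S := by rw [sum_add_distrib, ← mul_sum, sum_const, nsmul_eq_mul]; ring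

end WeightedAverage

theorem exists_pos_exp_neg_div_sq_le {a τ : ℝ} (ha : 0 < a) (hτ : 0 < τ) :
    ∃ σ > 0, exp (-a / σ ^ 2) ≤ τ := by
  -- with `σ ^ 2 = a * τ` this is `exp (-τ⁻¹) ≤ τ`, which follows from `τ⁻¹ + 1 ≤ exp τ⁻¹`
  refine ⟨√(a * τ), by positivity, ?_⟩
  rw [sq_sqrt (by positivity), neg_div, div_mul_cancel_left₀ ha.ne', exp_neg]
  calc (exp τ⁻¹)⁻¹ ≤ (τ⁻¹)⁻¹ := by
        gcongr
        linarith [add_one_le_exp τ⁻¹]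
    _ = τ := inv_inv τ

section GaussianKernel

variable {X : Type*} [PseudoMetricSpace X]

noncomputable def gaussianKernel (σ : ℝ) (x c : X) : ℝ := exp (-dist x c ^ 2 / σ ^ 2)

theorem gaussianKernel_pos (σ : ℝ) (x c : X) : 0 < gaussianKernel σ x c := exp_pos _

theorem gaussianKernel_le_mul_of_two_mul_le_dist {σ r : ℝ} {x c₀ c : X} (h₀ : dist x c₀ ≤ r)
    (h : 2 * r ≤ dist x c) :
    gaussianKernel σ x c ≤ exp (-r ^ 2 / σ ^ 2) * gaussianKernel σ x c₀ := by
  have hr : 0 ≤ r := dist_nonneg.trans h₀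
  have hsq : r ^ 2 + dist x c₀ ^ 2 ≤ dist x c ^ 2 := by nlinarith [dist_nonneg (x := x) (y := c₀)]
  rw [gaussianKernel, gaussianKernel, ← exp_add, exp_le_exp, ← add_div]
  gcongr
  linarith

theorem sum_gaussianKernel_pos (σ : ℝ) (x : X) {t : Finset X} (ht : t.Nonempty) :
    0 < ∑ c ∈ t, gaussianKernel σ x c :=
  sum_pos (fun c _ => gaussianKernel_pos σ x c) ht

theorem exists_finset_gaussianKernel_average_approx {K : Set X} (hK : IsCompact K)
    (hK₀ : K.Nonempty) {f : X → ℝ} (hf : ContinuousOn f K) {ε : ℝ} (hε : 0 < ε) :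
    ∃ t : Finset X, t.Nonempty ∧ ∃ σ > 0, ∀ x ∈ K,
      |f x - (∑ c ∈ t, f c * gaussianKernel σ x c) / ∑ c ∈ t, gaussianKernel σ x c| ≤ ε := by
  obtain ⟨ρ, hρ, hfρ⟩ := uniformContinuousOn_iff.1 (hK.uniformContinuousOn_of_continuous hf)
    (ε / 2) (half_pos hε)
  obtain ⟨t, htK, hcover⟩ :=
    hK.elim_nhds_subcover (fun x => ball x (ρ / 2)) fun x _ => ball_mem_nhds x (half_pos hρ)
  have hnear : ∀ x ∈ K, ∃ c₀ ∈ t, dist x c₀ < ρ / 2 := by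
    simpa only [Set.subset_def, Set.mem_iUnion, mem_ball, exists_prop] using hcover
  have ht : t.Nonempty :=
    let ⟨x, hx⟩ := hK₀
    let ⟨c₀, hc₀, _⟩ := hnear x hx
    ⟨c₀, hc₀⟩
  set M := diam (f '' K)
  have hM : ∀ x ∈ K, ∀ c ∈ K, |f x - f c| ≤ M := fun x hx c hc =>
    dist_le_diam_of_mem (hK.image_of_continuousOn hf).isBounded
      (Set.mem_image_of_mem f hx) (Set.mem_image_of_mem f hc)
  set τ := ε / (2 * (#t * M + 1))
  have hτ : #t * (M * τ) ≤ ε / 2 := by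
    have : 0 ≤ #t * M := by positivity
    rw [← mul_assoc, mul_div_assoc', div_le_div_iff₀ (by positivity) two_pos]
    nlinarith
  obtain ⟨σ, hσ, hsmall⟩ := exists_pos_exp_neg_div_sq_le (a := (ρ / 2) ^ 2) (by positivity)
    (show 0 < τ by positivity)
  refine ⟨t, ht, σ, hσ, fun x hx => ?_⟩
  obtain ⟨c₀, hc₀, hxc₀⟩ := hnear x hx
  calc _ ≤ ε / 2 + #t * (M * τ) := ?_
    _ ≤ ε := by linarith
  refine abs_sub_weighted_average_le (fun c _ => (gaussianKernel_pos σ x c).le)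
    (sum_gaussianKernel_pos σ x ht) fun c hc => ?_
  have hk := (gaussianKernel_pos σ x c).le
  have hS := sum_gaussianKernel_pos σ x ht
  rcases lt_or_ge (dist x c) ρ with hxc | hxc
  · have hclose : |f x - f c| ≤ ε / 2 := (hfρ x hx c (htK c hc) hxc).le
    have : 0 ≤ M * τ * ∑ c ∈ t, gaussianKernel σ x c := by
      have := diam_nonneg (s := f '' K); positivity
    nlinarith
  · have hfar : gaussianKernel σ x c ≤ τ * ∑ c ∈ t, gaussianKernel σ x c :=
      calc gaussianKernel σ x c ≤ exp (-(ρ / 2) ^ 2 / σ ^ 2) * gaussianKernel σ x c₀ :=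
            gaussianKernel_le_mul_of_two_mul_le_dist hxc₀.le (by linarith)
        _ ≤ τ * ∑ c ∈ t, gaussianKernel σ x c :=
            mul_le_mul hsmall (single_le_sum (fun c _ => (gaussianKernel_pos σ x c).le) hc₀)
              (gaussianKernel_pos σ x c₀).le (by positivity)
    have hbound := hM x hx c (htK c hc)
    have : 0 ≤ |f x - f c| := abs_nonneg _
    nlinarith

end GaussianKernel

theorem prod_exp_neg_sq_sub_div_sq {ι : Type*} [Fintype ι] (σ : ℝ) (x c : ι → ℝ) :
    ∏ i, exp (-(x i - c i) ^ 2 / σ ^ 2) =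
      gaussianKernel σ (WithLp.toLp 2 x : EuclideanSpace ℝ ι) (WithLp.toLp 2 c) := by
  rw [gaussianKernel, PiLp.dist_sq_eq_of_L2, ← exp_sum, ← sum_div, ← sum_neg_distrib]
  simp [Real.dist_eq, sq_abs]

theorem Finset.sum_equivFin_symm {α M : Type*} [AddCommMonoid M] (t : Finset α) (F : α → M) :
    ∑ j, F (t.equivFin.symm j) = ∑ x ∈ t, F x := by
  rw [Equiv.sum_comp t.equivFin.symm (fun x : t => F x), sum_coe_sort]

theorem fuzzy_universal_approximation_general
    (n : ℕ) (Ω : Set (Fin n → ℝ)) (hΩ : IsCompact Ω)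
    (f : (Fin n → ℝ) → ℝ) (hf : Continuous f) (ε : ℝ) (hε : 0 < ε) :
    ∃ (h : ℕ) (w : Fin h → ℝ) (c : Fin h → (Fin n → ℝ)) (σ : ℝ),
      1 ≤ h ∧ 0 < σ ∧
      ∀ Z ∈ Ω,
        0 < (∑ j, ∏ i, Real.exp (-(Z i - c j i) ^ 2 / σ ^ 2)) ∧
        |f Z - (∑ j, w j * ∏ i, Real.exp (-(Z i - c j i) ^ 2 / σ ^ 2))
            / (∑ j, ∏ i, Real.exp (-(Z i - c j i) ^ 2 / σ ^ 2))| ≤ ε := by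
  rcases Ω.eq_empty_or_nonempty with rfl | hΩ₀
  · exact ⟨1, 0, 0, 1, le_rfl, one_pos, by simp⟩
  obtain ⟨t, ht, σ, hσ, happrox⟩ := exists_finset_gaussianKernel_average_approx
    (hΩ.image (PiLp.continuous_toLp 2 _)) (hΩ₀.image _)
    (hf.comp (PiLp.continuous_ofLp 2 _)).continuousOn hε
  refine ⟨#t, fun j => f (t.equivFin.symm j),
    fun j => (t.equivFin.symm j : EuclideanSpace ℝ (Fin n)).ofLp, σ, card_pos.2 ht, hσ,
    fun Z hZ => ?_⟩
  simp only [prod_exp_neg_sq_sub_div_sq, WithLp.toLp_ofLp]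
  rw [sum_equivFin_symm t fun c => gaussianKernel σ _ c,
    sum_equivFin_symm t fun c => f c.ofLp * gaussianKernel σ _ c]
  exact ⟨sum_gaussianKernel_pos σ _ ht, happrox _ (Set.mem_image_of_mem _ hZ)⟩

/-- Fuzzy logic system universal approximation (Lemma 3): a fuzzy logic system with
normalized Gaussian membership functions can approximate any continuous function on
a compact set to any prescribed uniform accuracy `ε`. -/
theorem fuzzy_universal_approximation
    (n : ℕ) (hn : 1 ≤ n) (Ω : Set (Fin n → ℝ)) (hΩ : IsCompact Ω)
    (f : (Fin n → ℝ) → ℝ) (hf : Continuous f) (ε : ℝ) (hε : 0 < ε) :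
    ∃ (h : ℕ) (w : Fin h → ℝ) (c : Fin h → (Fin n → ℝ)) (σ : ℝ),
      1 ≤ h ∧ 0 < σ ∧
      ∀ Z ∈ Ω,
        0 < (∑ j, ∏ i, Real.exp (-(Z i - c j i) ^ 2 / σ ^ 2)) ∧
        |f Z - (∑ j, w j * ∏ i, Real.exp (-(Z i - c j i) ^ 2 / σ ^ 2))
            / (∑ j, ∏ i, Real.exp (-(Z i - c j i) ^ 2 / σ ^ 2))| ≤ ε :=
  fuzzy_universal_approximation_general n Ω hΩ f hf ε hε
end

section
/- For every $\gamma$ with $0 < \gamma < 1$ there exist constants $l_1 > 0$ and $l_2 > 0$ such that for all real numbers $\theta \ge 0$ and $\hat{\theta} \ge 0$: $(\theta - \hat{\theta})\,\hat{\theta}^{\gamma} \le l_1\,\theta^{1+\gamma} - l_2\,|\theta - \hat{\theta}|^{1+\gamma}$. -/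
/-! Write `x^(1+γ) = x · x^γ`. If `θ̂ ≥ θ`, the left side is `-(θ̂ - θ) θ̂^γ ≤ -(θ̂ - θ)^(1+γ)`, since
`θ̂ - θ ≤ θ̂`. If `θ̂ < θ`, both `(θ - θ̂) θ̂^γ` and `(θ - θ̂)^(1+γ)` are at most `θ^(1+γ)`.
Hence `l1 = 2`, `l2 = 1` work. -/

namespace Real

theorem rpow_one_add_le_mul_rpow {x y γ : ℝ} (hx : 0 ≤ x) (hxy : x ≤ y) (hγ : 0 ≤ γ) :
    x ^ (1 + γ) ≤ x * y ^ γ := by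
  rw [rpow_one_add' hx (by linarith)]
  exact mul_le_mul_of_nonneg_left (rpow_le_rpow hx hxy hγ) hx

theorem sub_mul_rpow_add_abs_sub_rpow_le {s t γ : ℝ} (hs : 0 ≤ s) (ht : 0 ≤ t) (hγ : 0 ≤ γ) :
    (t - s) * s ^ γ + |t - s| ^ (1 + γ) ≤ 2 * t ^ (1 + γ) := by
  have htt : t ^ (1 + γ) = t * t ^ γ := rpow_one_add' ht (by linarith)
  rcases le_total t s with hts | hst
  · have hdiff : (s - t) ^ (1 + γ) ≤ (s - t) * s ^ γ :=
      rpow_one_add_le_mul_rpow (by linarith) (by linarith) hγ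
    rw [abs_sub_comm, abs_of_nonneg (sub_nonneg.mpr hts)]
    nlinarith [rpow_nonneg ht (1 + γ)]
  · have hdiff : (t - s) ^ (1 + γ) ≤ (t - s) * t ^ γ :=
      rpow_one_add_le_mul_rpow (by linarith) (by linarith) hγ
    have hmono : s ^ γ ≤ t ^ γ := rpow_le_rpow hs hst hγ
    rw [abs_of_nonneg (sub_nonneg.mpr hst)]
    nlinarith [rpow_nonneg ht γ, rpow_nonneg hs γ]

end Real

theorem adaptive_law_inequality_sublinear_general
    (γ : ℝ) (hγ0 : 0 < γ) :
    ∃ l1 l2 : ℝ, 0 < l1 ∧ 0 < l2 ∧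
      ∀ θ θhat : ℝ, 0 ≤ θ → 0 ≤ θhat →
        (θ - θhat) * θhat ^ γ ≤ l1 * θ ^ (1 + γ) - l2 * |θ - θhat| ^ (1 + γ) := by
  refine ⟨2, 1, two_pos, one_pos, fun θ θhat hθ hθhat => ?_⟩
  linarith [Real.sub_mul_rpow_add_abs_sub_rpow_le hθhat hθ hγ0.le]

/-- Key adaptive-law inequality (equation (52)) for the sublinear exponent
`0 < γ < 1`: there exist `l1, l2 > 0` with
`(θ - θ̂) θ̂^γ ≤ l1 θ^(1+γ) - l2 |θ - θ̂|^(1+γ)` for all nonnegative `θ, θ̂`.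
Powers are real powers (`rpow`). -/
theorem adaptive_law_inequality_sublinear
    (γ : ℝ) (hγ0 : 0 < γ) (hγ1 : γ < 1) :
    ∃ l1 l2 : ℝ, 0 < l1 ∧ 0 < l2 ∧
      ∀ θ θhat : ℝ, 0 ≤ θ → 0 ≤ θhat →
        (θ - θhat) * θhat ^ γ ≤ l1 * θ ^ (1 + γ) - l2 * |θ - θhat| ^ (1 + γ) :=
  adaptive_law_inequality_sublinear_general γ hγ0
end

section
/- For every $\iota$ with $\iota > 1$ there exist constants $l_1 > 0$ and $l_2 > 0$ such that for all real numbers $\theta \ge 0$ and $\hat{\theta} \ge 0$: $(\theta - \hat{\theta})\,\hat{\theta}^{\iota} \le l_1\,\theta^{1+\iota} - l_2\,|\theta - \hat{\theta}|^{1+\iota}$. -/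
/-!
With `l₁ = 2` and `l₂ = 1`. If `θ̂ ≤ θ`, both `(θ - θ̂) θ̂^ι` and `|θ - θ̂|^(1+ι)` are at most
`θ^(1+ι)` by monotonicity of `t ↦ t^ι`. If `θ̂ > θ`, put `e = θ̂ - θ`: then
`(θ - θ̂) θ̂^ι + e^(1+ι) = e (e^ι - θ̂^ι) ≤ 0` because `e ≤ θ̂`.
-/

namespace Real

variable {x y ι : ℝ}

theorem sub_mul_rpow_le_rpow_one_add (hy : 0 ≤ y) (hyx : y ≤ x) (hι : 0 ≤ ι) :
    (x - y) * y ^ ι ≤ x ^ (1 + ι) := by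
  rw [rpow_one_add' (hy.trans hyx) (by linarith)]
  exact mul_le_mul (by linarith) (rpow_le_rpow hy hyx hι) (rpow_nonneg hy ι) (hy.trans hyx)

theorem sub_mul_rpow_add_sub_rpow_one_add_nonpos (hx : 0 ≤ x) (hxy : x ≤ y) (hι : 0 ≤ ι) :
    (x - y) * y ^ ι + (y - x) ^ (1 + ι) ≤ 0 := by
  have hyx : 0 ≤ y - x := by linarith
  have hpow : (y - x) ^ ι ≤ y ^ ι := rpow_le_rpow hyx (by linarith) hι
  rw [rpow_one_add' hyx (by linarith)]
  nlinarith

theorem sub_mul_rpow_add_abs_sub_rpow_one_add_le (hx : 0 ≤ x) (hy : 0 ≤ y) (hι : 0 ≤ ι) :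
    (x - y) * y ^ ι + |x - y| ^ (1 + ι) ≤ 2 * x ^ (1 + ι) := by
  rcases le_total y x with hyx | hxy
  · have habs : |x - y| ^ (1 + ι) ≤ x ^ (1 + ι) :=
      rpow_le_rpow (abs_nonneg _) (by rw [abs_of_nonneg (by linarith)]; linarith) (by linarith)
    linarith [sub_mul_rpow_le_rpow_one_add hy hyx hι]
  · rw [abs_sub_comm, abs_of_nonneg (by linarith)]
    linarith [sub_mul_rpow_add_sub_rpow_one_add_nonpos hx hxy hι, rpow_nonneg hx (1 + ι)]

end Real

/-- Key adaptive-law inequality (equation (52b)) for the superlinear exponent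
`ι > 1`: there exist `l1, l2 > 0` with
`(θ - θ̂) θ̂^ι ≤ l1 θ^(1+ι) - l2 |θ - θ̂|^(1+ι)` for all nonnegative `θ, θ̂`.
Powers are real powers (`rpow`). -/
theorem adaptive_law_inequality_superlinear
    (ι : ℝ) (hι : 1 < ι) :
    ∃ l1 l2 : ℝ, 0 < l1 ∧ 0 < l2 ∧
      ∀ θ θhat : ℝ, 0 ≤ θ → 0 ≤ θhat →
        (θ - θhat) * θhat ^ ι ≤ l1 * θ ^ (1 + ι) - l2 * |θ - θhat| ^ (1 + ι) := by
  refine ⟨2, 1, two_pos, one_pos, fun θ θhat hθ hθhat => ?_⟩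
  linarith [Real.sub_mul_rpow_add_abs_sub_rpow_one_add_le hθ hθhat (by linarith : (0 : ℝ) ≤ ι)]
end
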